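/- arXiv:1706.07713 — 10 statements merged into one kernel-verified Lean document; each statement's English description precedes it below -/
import Mathlib

section
/- Let X, Y be normed linear spaces and T, A bounded linear operators from X to Y. If there exist sequences (x_n), (y_n) of unit vectors in X such that ‖Tx_n‖ → ‖T‖, ‖Ty_n‖ → ‖T‖, Ax_n ∈ (Tx_n)⁺ for all n, and Ay_n ∈ (Ty_n)⁻ for all n, then T is Birkhoff-James orthogonal to A. -/
theorem stmt_1 {X Y : Type*} [NormedAddCommGroup X] [NormedSpace ℝ X]
    [NormedAddCommGroup Y] [NormedSpace ℝ Y]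
    (T A : X →L[ℝ] Y) (x y : ℕ → X)
    (hx : ∀ n, ‖x n‖ = 1) (hy : ∀ n, ‖y n‖ = 1)
    (hTx : Filter.Tendsto (fun n => ‖T (x n)‖) Filter.atTop (nhds ‖T‖))
    (hTy : Filter.Tendsto (fun n => ‖T (y n)‖) Filter.atTop (nhds ‖T‖))
    (hplus : ∀ n, ∀ l : ℝ, 0 ≤ l → ‖T (x n)‖ ≤ ‖T (x n) + l • A (x n)‖)
    (hminus : ∀ n, ∀ l : ℝ, l ≤ 0 → ‖T (y n)‖ ≤ ‖T (y n) + l • A (y n)‖) :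
    ∀ l : ℝ, ‖T‖ ≤ ‖T + l • A‖ := by
  intro l
  rcases le_total 0 l with hl | hl
  · refine le_of_tendsto' hTx fun n => ?_
    calc ‖T (x n)‖ ≤ ‖T (x n) + l • A (x n)‖ := hplus n l hl
      _ = ‖(T + l • A) (x n)‖ := by simp
      _ ≤ ‖T + l • A‖ * ‖x n‖ := (T + l • A).le_opNorm _
      _ = ‖T + l • A‖ := by rw [hx n, mul_one]
  · refine le_of_tendsto' hTy fun n => ?_
    calc ‖T (y n)‖ ≤ ‖T (y n) + l • A (y n)‖ := hminus n l hl
      _ = ‖(T + l • A) (y n)‖ := by simp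
      _ ≤ ‖T + l • A‖ * ‖y n‖ := (T + l • A).le_opNorm _
      _ = ‖T + l • A‖ := by rw [hy n, mul_one]
end

section
/- Let X be a normed linear space. A unit vector x is a rotund point of the closed unit ball of X (i.e., ‖y‖ = ‖(x+y)/2‖ = 1 implies x = y) if and only if for every nonzero y ∈ X, x ⊥_B y implies x ⊥_{SB} y. -/
theorem stmt_3 {X : Type*} [NormedAddCommGroup X] [NormedSpace ℝ X]
    (x : X) (hx : ‖x‖ = 1) :
    (∀ y : X, ‖y‖ = 1 → ‖(2 : ℝ)⁻¹ • (x + y)‖ = 1 → x = y) ↔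
      (∀ y : X, y ≠ 0 → (∀ l : ℝ, ‖x‖ ≤ ‖x + l • y‖) →
        (∀ l : ℝ, l ≠ 0 → ‖x‖ < ‖x + l • y‖)) := by
  constructor
  · intro h y hy hB l hl
    rcases lt_or_eq_of_le (hB l) with h' | h'
    · exact h'
    exfalso
    set z := x + l • y with hzdef
    have hz : ‖z‖ = 1 := by rw [← h', hx]
    have h1 : (2:ℝ)⁻¹ • (x + z) = x + (l/2) • y := by
      rw [hzdef]; module
    have hmid : ‖(2:ℝ)⁻¹ • (x + z)‖ = 1 := by
      refine le_antisymm ?_ ?_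
      · calc ‖(2:ℝ)⁻¹ • (x + z)‖ ≤ |(2:ℝ)⁻¹| * (‖x‖ + ‖z‖) := by
              rw [norm_smul]
              exact mul_le_mul_of_nonneg_left (norm_add_le _ _) (abs_nonneg _)
          _ = 1 := by rw [hx, hz, abs_of_pos (by norm_num : (0:ℝ) < (2:ℝ)⁻¹)]; norm_num
      · rw [h1, ← hx]; exact hB (l/2)
    have hxz := h z hz hmid
    have : l • y = 0 := by
      have := hxz.symm
      rw [hzdef, left_eq_add] at hxz
      exact hxz
    rcases smul_eq_zero.mp this with h | h
    · exact hl h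
    · exact hy h
  · intro h y hy hmid
    by_contra hxy
    set u := y - x with hudef
    have hu : u ≠ 0 := sub_ne_zero.mpr (Ne.symm hxy)
    have hxu : x + u = y := by rw [hudef]; abel
    have hhalf : ‖x + (2:ℝ)⁻¹ • u‖ = 1 := by
      have : x + (2:ℝ)⁻¹ • u = (2:ℝ)⁻¹ • (x + y) := by rw [hudef]; module
      rw [this, hmid]
    have key : ∀ t : ℝ, 1 ≤ ‖x + t • u‖ := by
      intro t
      rcases lt_trichotomy t (2:ℝ)⁻¹ with ht | ht | ht
      · set θ : ℝ := 1/(2*(1-t)) with hθdef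
        have h1t : (0:ℝ) < 1 - t := by linarith
        have hθpos : 0 < θ := by positivity
        have hθle : θ ≤ 1 := by
          rw [hθdef, div_le_one (by linarith)]; linarith
        have hθ1 : θ * t + (1 - θ) = (2:ℝ)⁻¹ := by rw [hθdef]; field_simp; ring
        have hid : x + (2:ℝ)⁻¹ • u = θ • (x + t • u) + (1-θ) • (x + u) := by
          have : θ • (x + t • u) + (1-θ) • (x + u) = x + (θ * t + (1 - θ)) • u := by
            module
          rw [this, hθ1]
        have hle : (1:ℝ) ≤ θ * ‖x + t • u‖ + (1 - θ) := by
          calc (1:ℝ) = ‖x + (2:ℝ)⁻¹ • u‖ := hhalf.symm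
            _ ≤ ‖θ • (x + t • u)‖ + ‖(1-θ) • (x + u)‖ := by
                rw [hid]; exact norm_add_le _ _
            _ = θ * ‖x + t • u‖ + (1 - θ) := by
                rw [norm_smul, norm_smul, hxu, hy, Real.norm_eq_abs, Real.norm_eq_abs,
                  abs_of_pos hθpos, abs_of_nonneg (by linarith : (0:ℝ) ≤ 1 - θ)]
                ring
        exact le_of_mul_le_mul_left (by linarith) hθpos
      · rw [ht]; exact hhalf.ge
      · set θ : ℝ := 1/(2*t) with hθdef
        have htpos : (0:ℝ) < t := by linarith
        have hθpos : 0 < θ := by positivity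
        have hθlt : θ < 1 := by rw [hθdef, div_lt_one (by linarith)]; linarith
        have hθ1 : θ * t = (2:ℝ)⁻¹ := by rw [hθdef]; field_simp
        have hid : x + (2:ℝ)⁻¹ • u = (1-θ) • x + θ • (x + t • u) := by
          have : (1-θ) • x + θ • (x + t • u) = x + (θ * t) • u := by module
          rw [this, hθ1]
        have hle : (1:ℝ) ≤ (1 - θ) + θ * ‖x + t • u‖ := by
          calc (1:ℝ) = ‖x + (2:ℝ)⁻¹ • u‖ := hhalf.symm
            _ ≤ ‖(1-θ) • x‖ + ‖θ • (x + t • u)‖ := by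
                rw [hid]; exact norm_add_le _ _
            _ = (1 - θ) + θ * ‖x + t • u‖ := by
                rw [norm_smul, norm_smul, hx, Real.norm_eq_abs, Real.norm_eq_abs,
                  abs_of_pos hθpos, abs_of_nonneg (by linarith : (0:ℝ) ≤ 1 - θ)]
                ring
        exact le_of_mul_le_mul_left (by linarith) hθpos
    have hB : ∀ l : ℝ, ‖x‖ ≤ ‖x + l • u‖ := fun l => by rw [hx]; exact key l
    have := h u hu hB 1 one_ne_zero
    rw [hx, one_smul, hxu, hy] at this
    exact lt_irrefl 1 this
end

section
/- Let X, Y be normed linear spaces and let T be a rotund point of the unit ball of B(X,Y) rescaled to its norm (i.e., T/‖T‖ is a rotund point of the unit ball of the operator space). Then for any bounded operator A, T ⊥_B A if and only if there exist sequences (x_n), (y_n) of unit vectors in X and sequences of positive reals (ε_n), (δ_n) with ε_n → 0, δ_n → 0, ‖Tx_n‖ → ‖T‖, ‖Ty_n‖ → ‖T‖, and Ax_n ∈ (Tx_n)^{+(ε_n)}, Ay_n ∈ (Ty_n)^{−(δ_n)} for all n. -/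
open Filter ContinuousLinearMap

private lemma exists_unit_vec {X Y : Type*} [NormedAddCommGroup X] [NormedSpace ℝ X]
    [NormedAddCommGroup Y] [NormedSpace ℝ Y]
    (T : X →L[ℝ] Y) {r : ℝ} (hr0 : 0 ≤ r) (hr : r < ‖T‖) :
    ∃ u : X, ‖u‖ = 1 ∧ r < ‖T u‖ := by
  obtain ⟨x, hx1, hx2⟩ := T.exists_lt_apply_of_lt_opNorm hr
  have hx0 : x ≠ 0 := by
    rintro rfl
    simp only [map_zero, norm_zero] at hx2
    linarith
  have hnx : 0 < ‖x‖ := norm_pos_iff.mpr hx0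
  refine ⟨‖x‖⁻¹ • x, ?_, ?_⟩
  · rw [norm_smul, norm_inv, norm_norm, inv_mul_cancel₀ hnx.ne']
  · rw [map_smul, norm_smul, norm_inv, norm_norm]
    have h1 : (1 : ℝ) ≤ ‖x‖⁻¹ := (one_le_inv₀ hnx).mpr hx1.le
    calc r < ‖T x‖ := hx2
      _ = 1 * ‖T x‖ := (one_mul _).symm
      _ ≤ ‖x‖⁻¹ * ‖T x‖ := mul_le_mul_of_nonneg_right h1 (norm_nonneg _)

private lemma aux_seq {X Y : Type*} [NormedAddCommGroup X] [NormedSpace ℝ X]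
    [NormedAddCommGroup Y] [NormedSpace ℝ Y]
    (T A : X →L[ℝ] Y) (hb : 0 < ‖T‖)
    (hstrict : ∀ μ : ℝ, 0 < μ → ‖T‖ < ‖T + μ • A‖) :
    ∃ x : ℕ → X, (∀ n, ‖x n‖ = 1) ∧
      Tendsto (fun n => ‖T (x n)‖) atTop (nhds ‖T‖) ∧
      (∀ n : ℕ, ∀ l : ℝ, 0 ≤ l →
        (1 - 1/((n:ℝ)+1)) * ‖T (x n)‖ ≤ ‖T (x n) + l • A (x n)‖) := by
  set b := ‖T‖ with hbdef
  set K := ‖A‖ + 1 with hKdef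
  have hK : 0 < K := by have := norm_nonneg A; simp only [hKdef]; linarith
  obtain ⟨lam, hlamdef⟩ : ∃ lam : ℕ → ℝ, ∀ n : ℕ, lam n = b / (2 * K * ((n:ℝ)+1)) :=
    ⟨_, fun n => rfl⟩
  clear_value b K
  have hN : ∀ n : ℕ, (0:ℝ) < (n:ℝ) + 1 := fun n => by positivity
  have hlam : ∀ n, 0 < lam n := fun n => by
    rw [hlamdef n]
    exact div_pos hb (mul_pos (mul_pos (by norm_num) hK) (hN n))
  have hKlam : ∀ n, K * lam n = b / (2 * ((n:ℝ)+1)) := by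
    intro n
    rw [hlamdef n]
    field_simp
  have hB : ∀ n : ℕ, ∃ u : X, ‖u‖ = 1 ∧
      ‖T + lam n • A‖ - min ((‖T + lam n • A‖ - b)/2) (‖T + lam n • A‖/2)
        < ‖(T + lam n • A) u‖ := by
    intro n
    have hτ : 0 < ‖T + lam n • A‖ - b := by
      have := hstrict (lam n) (hlam n); simp only [hbdef]; linarith
    have hBpos : 0 < ‖T + lam n • A‖ := by linarith
    apply exists_unit_vec
    · have h1 : min ((‖T + lam n • A‖ - b)/2) (‖T + lam n • A‖/2)
        ≤ ‖T + lam n • A‖/2 := min_le_right _ _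
      linarith
    · have hηpos : 0 < min ((‖T + lam n • A‖ - b)/2) (‖T + lam n • A‖/2) :=
        lt_min (by linarith) (by linarith)
      linarith
  choose u hu1 hu2 using hB
  have hkey : ∀ n, b < ‖T (u n) + lam n • A (u n)‖ := by
    intro n
    have h2 := hu2 n
    have hτ : 0 < ‖T + lam n • A‖ - b := by
      have := hstrict (lam n) (hlam n); simp only [hbdef]; linarith
    have h3 : min ((‖T + lam n • A‖ - b)/2) (‖T + lam n • A‖/2)
        ≤ (‖T + lam n • A‖ - b)/2 := min_le_left _ _
    have h4 : (T + lam n • A) (u n) = T (u n) + lam n • A (u n) := by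
      simp
    rw [h4] at h2
    linarith
  have hAu : ∀ n, ‖A (u n)‖ ≤ ‖A‖ := by
    intro n
    have := A.le_opNorm (u n)
    rwa [hu1 n, mul_one] at this
  have hTu_le : ∀ n, ‖T (u n)‖ ≤ b := by
    intro n
    have := T.le_opNorm (u n)
    rwa [hu1 n, mul_one, ← hbdef] at this
  have hTu_ge : ∀ n, b - K * lam n ≤ ‖T (u n)‖ := by
    intro n
    have tri : ‖T (u n) + lam n • A (u n)‖ ≤ ‖T (u n)‖ + ‖lam n • A (u n)‖ :=
      norm_add_le _ _
    have hsm : ‖lam n • A (u n)‖ = lam n * ‖A (u n)‖ := by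
      rw [norm_smul, Real.norm_eq_abs, abs_of_pos (hlam n)]
    have h5 : lam n * ‖A (u n)‖ ≤ lam n * K := by
      apply mul_le_mul_of_nonneg_left _ (hlam n).le
      have := hAu n; simp only [hKdef]; linarith
    have h6 := hkey n
    nlinarith
  have hhalf : ∀ n, b/2 ≤ ‖T (u n)‖ := by
    intro n
    have h1 := hTu_ge n
    have h2 := hKlam n
    have h3 : b / (2 * ((n:ℝ)+1)) ≤ b / 2 := by
      gcongr <;> first
        | exact hb.le
        | linarith [Nat.cast_nonneg (α := ℝ) n]
    linarith
  refine ⟨u, hu1, ?_, ?_⟩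
  · have hl0 : Tendsto lam atTop (nhds 0) := by
      have h1 := tendsto_one_div_add_atTop_nhds_zero_nat.const_mul (b/(2*K))
      rw [mul_zero] at h1
      convert h1 using 2 with n
      rw [hlamdef n]
      field_simp
    have hlow : Tendsto (fun n => b - K * lam n) atTop (nhds b) := by
      have h2 := (hl0.const_mul K)
      rw [mul_zero] at h2
      have hc : Tendsto (fun _ : ℕ => b) atTop (nhds b) := tendsto_const_nhds
      have h3 := hc.sub h2
      simpa using h3
    exact tendsto_of_tendsto_of_tendsto_of_le_of_le hlow tendsto_const_nhds hTu_ge hTu_le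
  · intro n l hl
    rcases le_or_gt l (lam n) with hcase | hcase
    · -- small l : Lipschitz bound
      have tri : ‖T (u n)‖ - ‖l • A (u n)‖ ≤ ‖T (u n) + l • A (u n)‖ := by
        have h := norm_sub_norm_le (T (u n)) (-(l • A (u n)))
        rwa [sub_neg_eq_add, norm_neg] at h
      have hsm : ‖l • A (u n)‖ = l * ‖A (u n)‖ := by
        rw [norm_smul, Real.norm_eq_abs, abs_of_nonneg hl]
      have h5 : l * ‖A (u n)‖ ≤ lam n * K :=
        mul_le_mul hcase (by have := hAu n; simp only [hKdef]; linarith)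
          (norm_nonneg _) (hlam n).le
      have h6 : lam n * K ≤ ‖T (u n)‖ / ((n:ℝ)+1) := by
        have h2 := hKlam n
        have h3 := hhalf n
        have h7 : b / (2*((n:ℝ)+1)) = (b/2) / ((n:ℝ)+1) := (div_div b 2 _).symm
        have h8 : (b/2) / ((n:ℝ)+1) ≤ ‖T (u n)‖ / ((n:ℝ)+1) := by
          gcongr <;> first
            | exact h3
            | exact (hN n).le
            | positivity
        have h9 : lam n * K = K * lam n := mul_comm _ _
        linarith
      have hexp : (1 - 1/((n:ℝ)+1)) * ‖T (u n)‖
          = ‖T (u n)‖ - ‖T (u n)‖/((n:ℝ)+1) := by ring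
      linarith
    · -- large l : convexity
      set t := lam n / l with htdef
      have hl0 : 0 < l := lt_trans (hlam n) hcase
      have ht0 : 0 < t := div_pos (hlam n) hl0
      have ht1 : t < 1 := (div_lt_one hl0).mpr hcase
      have htl : t * l = lam n := div_mul_cancel₀ _ hl0.ne'
      have hid : (1 - t) • T (u n) + t • (T (u n) + l • A (u n))
          = T (u n) + lam n • A (u n) := by
        rw [smul_add, smul_smul, htl]
        module
      have hbound : ‖T (u n) + lam n • A (u n)‖
          ≤ (1-t)*‖T (u n)‖ + t*‖T (u n) + l • A (u n)‖ := by
        rw [← hid]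
        calc ‖(1 - t) • T (u n) + t • (T (u n) + l • A (u n))‖
            ≤ ‖(1 - t) • T (u n)‖ + ‖t • (T (u n) + l • A (u n))‖ := norm_add_le _ _
          _ = (1-t)*‖T (u n)‖ + t*‖T (u n) + l • A (u n)‖ := by
              rw [norm_smul, norm_smul, Real.norm_eq_abs, Real.norm_eq_abs,
                abs_of_pos ht0, abs_of_nonneg (by linarith : (0:ℝ) ≤ 1 - t)]
      have hkey' := hkey n
      have hTle := hTu_le n
      have h1 : (1-t)*‖T (u n)‖ ≤ (1-t)*b :=
        mul_le_mul_of_nonneg_left hTle (by linarith)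
      have hexp : (1-t)*b = b - t*b := by ring
      have h2 : t * b < t * ‖T (u n) + l • A (u n)‖ := by linarith
      have h3 : b < ‖T (u n) + l • A (u n)‖ := lt_of_mul_lt_mul_left h2 ht0.le
      have h4 : (1 - 1/((n:ℝ)+1)) * ‖T (u n)‖ ≤ 1 * ‖T (u n)‖ := by
        apply mul_le_mul_of_nonneg_right _ (norm_nonneg _)
        have h5 : 0 ≤ 1/((n:ℝ)+1) := by positivity
        linarith
      rw [one_mul] at h4
      linarith

theorem stmt_4 {X Y : Type*} [NormedAddCommGroup X] [NormedSpace ℝ X]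
    [NormedAddCommGroup Y] [NormedSpace ℝ Y]
    (T : X →L[ℝ] Y) (hT : T ≠ 0)
    (hrotund : ∀ S : X →L[ℝ] Y, ‖S‖ = 1 →
      ‖(2 : ℝ)⁻¹ • (‖T‖⁻¹ • T + S)‖ = 1 → ‖T‖⁻¹ • T = S)
    (A : X →L[ℝ] Y) :
    (∀ l : ℝ, ‖T‖ ≤ ‖T + l • A‖) ↔
      ∃ (x y : ℕ → X) (ε δ : ℕ → ℝ),
        (∀ n, ‖x n‖ = 1) ∧ (∀ n, ‖y n‖ = 1) ∧
        (∀ n, 0 < ε n) ∧ (∀ n, 0 < δ n) ∧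
        Filter.Tendsto ε Filter.atTop (nhds 0) ∧
        Filter.Tendsto δ Filter.atTop (nhds 0) ∧
        Filter.Tendsto (fun n => ‖T (x n)‖) Filter.atTop (nhds ‖T‖) ∧
        Filter.Tendsto (fun n => ‖T (y n)‖) Filter.atTop (nhds ‖T‖) ∧
        (∀ n, ∀ l : ℝ, 0 ≤ l →
          Real.sqrt (1 - (ε n) ^ 2) * ‖T (x n)‖ ≤ ‖T (x n) + l • A (x n)‖) ∧
        (∀ n, ∀ l : ℝ, l ≤ 0 →
          Real.sqrt (1 - (δ n) ^ 2) * ‖T (y n)‖ ≤ ‖T (y n) + l • A (y n)‖) := by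
  have hb : 0 < ‖T‖ := norm_pos_iff.mpr hT
  have hN : ∀ n : ℕ, (0:ℝ) < (n:ℝ) + 1 := fun n => by positivity
  -- the canonical epsilon sequence
  set ε : ℕ → ℝ := fun n => Real.sqrt (1 - (1 - 1/((n:ℝ)+1))^2) with hεdef
  have hNu : ∀ n : ℕ, 0 < 1/((n:ℝ)+1) ∧ 1/((n:ℝ)+1) ≤ 1 := by
    intro n
    constructor
    · positivity
    · rw [div_le_one (hN n)]
      have : (0:ℝ) ≤ (n:ℝ) := Nat.cast_nonneg n
      linarith
  have hεinner : ∀ n : ℕ, 0 < 1 - (1 - 1/((n:ℝ)+1))^2 := by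
    intro n
    obtain ⟨h1, h2⟩ := hNu n
    nlinarith
  have hεpos : ∀ n, 0 < ε n := fun n => Real.sqrt_pos.mpr (hεinner n)
  have hεtend : Tendsto ε atTop (nhds 0) := by
    have h1 : Tendsto (fun n : ℕ => 1 - (1 - 1/((n:ℝ)+1))^2) atTop
        (nhds (1 - (1 - 0)^2)) := by
      apply tendsto_const_nhds.sub
      exact ((tendsto_const_nhds.sub tendsto_one_div_add_atTop_nhds_zero_nat).pow 2)
    have h2 := h1.sqrt
    have h3 : Real.sqrt (1 - (1-(0:ℝ))^2) = 0 := by norm_num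
    rw [h3] at h2
    rw [hεdef]
    exact h2
  have hεsqrt : ∀ n : ℕ, Real.sqrt (1 - ε n ^ 2) = 1 - 1/((n:ℝ)+1) := by
    intro n
    obtain ⟨h1, h2⟩ := hNu n
    have h3 : ε n ^ 2 = 1 - (1 - 1/((n:ℝ)+1))^2 := Real.sq_sqrt (hεinner n).le
    rw [h3]
    have h4 : 1 - (1 - (1 - 1/((n:ℝ)+1))^2) = (1 - 1/((n:ℝ)+1))^2 := by ring
    rw [h4, Real.sqrt_sq (by linarith)]
  constructor
  · intro horth
    by_cases hA : A = 0
    · -- trivial case A = 0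
      have hseq : ∀ n : ℕ, ∃ u : X, ‖u‖ = 1 ∧
          max (‖T‖ - 1/((n:ℝ)+1)) (‖T‖/2) < ‖T u‖ := by
        intro n
        apply exists_unit_vec
        · exact le_max_of_le_right (by linarith)
        · apply max_lt
          · have := (hNu n).1; linarith
          · linarith
      choose u hu1 hu2 using hseq
      have hTu_le : ∀ n, ‖T (u n)‖ ≤ ‖T‖ := by
        intro n
        have := T.le_opNorm (u n)
        rwa [hu1 n, mul_one] at this
      have hTu_ge : ∀ n : ℕ, ‖T‖ - 1/((n:ℝ)+1) ≤ ‖T (u n)‖ := by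
        intro n
        exact le_of_lt (lt_of_le_of_lt (le_max_left _ _) (hu2 n))
      have htend : Tendsto (fun n => ‖T (u n)‖) atTop (nhds ‖T‖) := by
        have hlow : Tendsto (fun n : ℕ => ‖T‖ - 1/((n:ℝ)+1)) atTop (nhds ‖T‖) := by
          have hc : Tendsto (fun _ : ℕ => ‖T‖) atTop (nhds ‖T‖) := tendsto_const_nhds
          have h3 := hc.sub tendsto_one_div_add_atTop_nhds_zero_nat
          simpa using h3
        exact tendsto_of_tendsto_of_tendsto_of_le_of_le hlow tendsto_const_nhds
          hTu_ge hTu_le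
      have hineq : ∀ n : ℕ, ∀ l : ℝ,
          Real.sqrt (1 - ε n ^ 2) * ‖T (u n)‖ ≤ ‖T (u n) + l • A (u n)‖ := by
        intro n l
        rw [hA]
        simp only [ContinuousLinearMap.zero_apply, smul_zero, add_zero]
        have h1 : Real.sqrt (1 - ε n ^ 2) ≤ 1 := by
          rw [hεsqrt n]
          have := (hNu n).1; linarith
        calc Real.sqrt (1 - ε n ^ 2) * ‖T (u n)‖ ≤ 1 * ‖T (u n)‖ :=
              mul_le_mul_of_nonneg_right h1 (norm_nonneg _)
          _ = ‖T (u n)‖ := one_mul _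
      exact ⟨u, u, ε, ε, hu1, hu1, hεpos, hεpos, hεtend, hεtend, htend, htend,
        fun n l _ => hineq n l, fun n l _ => hineq n l⟩
    · -- A ≠ 0 : rotundity gives strictness
      have hstrict : ∀ μ : ℝ, μ ≠ 0 → ‖T‖ < ‖T + μ • A‖ := by
        intro μ hμ
        rcases (horth μ).lt_or_eq with h | heq
        · exact h
        · exfalso
          set S : X →L[ℝ] Y := ‖T‖⁻¹ • (T + μ • A) with hSdef
          have hS : ‖S‖ = 1 := by
            have hns := norm_smul (‖T‖⁻¹) (T + μ • A)
            rw [hSdef, hns, norm_inv, norm_norm, ← heq, inv_mul_cancel₀ hb.ne']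
          have hmid : (2:ℝ)⁻¹ • (‖T‖⁻¹ • T + S) = ‖T‖⁻¹ • (T + (μ/2) • A) := by
            rw [hSdef]
            module
          have hmid_ge : ‖T‖ ≤ ‖T + (μ/2) • A‖ := horth (μ/2)
          have hmid_le : ‖T + (μ/2) • A‖ ≤ ‖T‖ := by
            have hconv : T + (μ/2) • A = (2:ℝ)⁻¹ • (T + (T + μ • A)) := by module
            have hns := norm_smul ((2:ℝ)⁻¹) (T + (T + μ • A))
            rw [hconv, hns, norm_inv, Real.norm_ofNat]
            have h1 : ‖T + (T + μ • A)‖ ≤ ‖T‖ + ‖T + μ • A‖ := norm_add_le _ _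
            rw [← heq] at h1
            calc (2:ℝ)⁻¹ * ‖T + (T + μ • A)‖ ≤ (2:ℝ)⁻¹ * (‖T‖ + ‖T‖) := by
                  apply mul_le_mul_of_nonneg_left h1 (by norm_num)
              _ = ‖T‖ := by ring
          have hmid_norm : ‖(2:ℝ)⁻¹ • (‖T‖⁻¹ • T + S)‖ = 1 := by
            have hns := norm_smul (‖T‖⁻¹) (T + (μ/2) • A)
            rw [hmid, hns, norm_inv, norm_norm]
            rw [le_antisymm hmid_le hmid_ge, inv_mul_cancel₀ hb.ne']
          have hSeq := hrotund S hS hmid_norm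
          rw [hSdef] at hSeq
          have hTeq : T = T + μ • A :=
            smul_right_injective (X →L[ℝ] Y) (inv_ne_zero hb.ne') hSeq
          have hmuA : μ • A = 0 := by
            have h10 := hTeq.symm
            rwa [add_eq_left] at h10
          have hA0 : A = 0 :=
            smul_right_injective (X →L[ℝ] Y) hμ
              (show μ • A = μ • (0 : X →L[ℝ] Y) by rw [hmuA, smul_zero])
          exact hA hA0
      obtain ⟨x, hx1, hxT, hxineq⟩ := aux_seq T A hb
        (fun μ hμ => hstrict μ hμ.ne')
      have hstrictneg : ∀ μ : ℝ, 0 < μ → ‖T‖ < ‖T + μ • (-A)‖ := by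
        intro μ hμ
        have h1 : T + μ • (-A) = T + (-μ) • A := by module
        rw [h1]
        exact hstrict (-μ) (by linarith)
      obtain ⟨y, hy1, hyT, hyineq⟩ := aux_seq T (-A) hb hstrictneg
      refine ⟨x, y, ε, ε, hx1, hy1, hεpos, hεpos, hεtend, hεtend, hxT, hyT, ?_, ?_⟩
      · intro n l hl
        rw [hεsqrt n]
        exact hxineq n l hl
      · intro n l hl
        rw [hεsqrt n]
        have h1 := hyineq n (-l) (by linarith)
        have h2 : T (y n) + (-l) • (-A) (y n) = T (y n) + l • A (y n) := by
          simp
        rwa [h2] at h1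
  · rintro ⟨x, y, ε', δ', hx1, hy1, hε', hδ', hεt, hδt, hTx, hTy, hxineq, hyineq⟩ l
    rcases le_or_gt 0 l with hl | hl
    · have key : ∀ n : ℕ, Real.sqrt (1 - ε' n ^ 2) * ‖T (x n)‖ ≤ ‖T + l • A‖ := by
        intro n
        refine (hxineq n l hl).trans ?_
        have h1 : T (x n) + l • A (x n) = (T + l • A) (x n) := by simp
        rw [h1]
        have := (T + l • A).le_opNorm (x n)
        rwa [hx1 n, mul_one] at this
      have hlim : Tendsto (fun n => Real.sqrt (1 - ε' n ^ 2) * ‖T (x n)‖) atTop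
          (nhds ‖T‖) := by
        have h1 : Tendsto (fun n => 1 - ε' n ^ 2) atTop (nhds (1 - 0^2)) :=
          tendsto_const_nhds.sub (hεt.pow 2)
        have h2 := h1.sqrt
        norm_num at h2
        have h3 := h2.mul hTx
        rwa [one_mul] at h3
      exact le_of_tendsto' hlim key
    · have key : ∀ n : ℕ, Real.sqrt (1 - δ' n ^ 2) * ‖T (y n)‖ ≤ ‖T + l • A‖ := by
        intro n
        refine (hyineq n l hl.le).trans ?_
        have h1 : T (y n) + l • A (y n) = (T + l • A) (y n) := by simp
        rw [h1]
        have := (T + l • A).le_opNorm (y n)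
        rwa [hy1 n, mul_one] at this
      have hlim : Tendsto (fun n => Real.sqrt (1 - δ' n ^ 2) * ‖T (y n)‖) atTop
          (nhds ‖T‖) := by
        have h1 : Tendsto (fun n => 1 - δ' n ^ 2) atTop (nhds (1 - 0^2)) :=
          tendsto_const_nhds.sub (hδt.pow 2)
        have h2 := h1.sqrt
        norm_num at h2
        have h3 := h2.mul hTy
        rwa [one_mul] at h3
      exact le_of_tendsto' hlim key
end

section
/- Let X, Y be normed linear spaces and T, A bounded linear operators with T ≠ 0. Suppose there exist sequences (x_n), (y_n) of unit vectors and positive reals ε_n → 0, δ_n → 0 such that ‖Tx_n‖ → ‖T‖, ‖Ty_n‖ → ‖T‖, and for all n, ‖Tx_n + λAx_n‖ ≥ √(1−ε_n²)·‖Tx_n‖ for all λ ≥ 0 and ‖Ty_n + λAy_n‖ ≥ √(1−δ_n²)·‖Ty_n‖ for all λ ≤ 0. Then ‖T + λA‖ ≥ ‖T‖ for all real λ. -/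
open Filter Topology

theorem ContinuousLinearMap.le_opNorm_of_tendsto {𝕜 E F : Type*} [NontriviallyNormedField 𝕜]
    [SeminormedAddCommGroup E] [NormedSpace 𝕜 E] [SeminormedAddCommGroup F] [NormedSpace 𝕜 F]
    {ι : Type*} {l : Filter ι} [l.NeBot] (S : E →L[𝕜] F) {u : ι → E} (hu : ∀ i, ‖u i‖ = 1)
    {c : ι → ℝ} {a : ℝ} (hc : Tendsto c l (𝓝 a)) (h : ∀ i, c i ≤ ‖S (u i)‖) : a ≤ ‖S‖ :=
  le_of_tendsto' hc fun i => (h i).trans <| by simpa [hu i] using S.le_opNorm (u i)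

theorem Filter.Tendsto.sqrt_one_sub_sq_mul {ι : Type*} {l : Filter ι} {ε c : ι → ℝ} {a : ℝ}
    (hε : Tendsto ε l (𝓝 0)) (hc : Tendsto c l (𝓝 a)) :
    Tendsto (fun i => Real.sqrt (1 - ε i ^ 2) * c i) l (𝓝 a) := by
  have hsqrt : Tendsto (fun i => Real.sqrt (1 - ε i ^ 2)) l (𝓝 1) := by
    simpa using ((tendsto_const_nhds (x := (1 : ℝ))).sub (hε.pow 2)).sqrt
  simpa using hsqrt.mul hc

theorem stmt_5_general {X Y : Type*} [NormedAddCommGroup X] [NormedSpace ℝ X]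
    [NormedAddCommGroup Y] [NormedSpace ℝ Y]
    (T A : X →L[ℝ] Y) (x y : ℕ → X) (ε δ : ℕ → ℝ)
    (hx : ∀ n, ‖x n‖ = 1) (hy : ∀ n, ‖y n‖ = 1)
    (hε0 : Filter.Tendsto ε Filter.atTop (nhds 0))
    (hδ0 : Filter.Tendsto δ Filter.atTop (nhds 0))
    (hTx : Filter.Tendsto (fun n => ‖T (x n)‖) Filter.atTop (nhds ‖T‖))
    (hTy : Filter.Tendsto (fun n => ‖T (y n)‖) Filter.atTop (nhds ‖T‖))
    (hplus : ∀ n, ∀ l : ℝ, 0 ≤ l →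
      Real.sqrt (1 - (ε n) ^ 2) * ‖T (x n)‖ ≤ ‖T (x n) + l • A (x n)‖)
    (hminus : ∀ n, ∀ l : ℝ, l ≤ 0 →
      Real.sqrt (1 - (δ n) ^ 2) * ‖T (y n)‖ ≤ ‖T (y n) + l • A (y n)‖) :
    ∀ l : ℝ, ‖T‖ ≤ ‖T + l • A‖ := by
  intro l
  rcases le_total 0 l with hl | hl
  · exact (T + l • A).le_opNorm_of_tendsto hx (hε0.sqrt_one_sub_sq_mul hTx) (hplus · l hl)
  · exact (T + l • A).le_opNorm_of_tendsto hy (hδ0.sqrt_one_sub_sq_mul hTy) (hminus · l hl)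

theorem stmt_5 {X Y : Type*} [NormedAddCommGroup X] [NormedSpace ℝ X]
    [NormedAddCommGroup Y] [NormedSpace ℝ Y]
    (T A : X →L[ℝ] Y) (hT : T ≠ 0) (x y : ℕ → X) (ε δ : ℕ → ℝ)
    (hx : ∀ n, ‖x n‖ = 1) (hy : ∀ n, ‖y n‖ = 1)
    (hε : ∀ n, 0 < ε n) (hδ : ∀ n, 0 < δ n)
    (hε0 : Filter.Tendsto ε Filter.atTop (nhds 0))
    (hδ0 : Filter.Tendsto δ Filter.atTop (nhds 0))
    (hTx : Filter.Tendsto (fun n => ‖T (x n)‖) Filter.atTop (nhds ‖T‖))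
    (hTy : Filter.Tendsto (fun n => ‖T (y n)‖) Filter.atTop (nhds ‖T‖))
    (hplus : ∀ n, ∀ l : ℝ, 0 ≤ l →
      Real.sqrt (1 - (ε n) ^ 2) * ‖T (x n)‖ ≤ ‖T (x n) + l • A (x n)‖)
    (hminus : ∀ n, ∀ l : ℝ, l ≤ 0 →
      Real.sqrt (1 - (δ n) ^ 2) * ‖T (y n)‖ ≤ ‖T (y n) + l • A (y n)‖) :
    ∀ l : ℝ, ‖T‖ ≤ ‖T + l • A‖ :=
  stmt_5_general T A x y ε δ hx hy hε0 hδ0 hTx hTy hplus hminus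
end

section
/- Let X, Y be normed linear spaces and T a nonzero bounded linear operator from X to Y. Then for any bounded operator A, T ⊥_B A if and only if either (a) there exists a sequence (x_n) of unit vectors with ‖Tx_n‖ → ‖T‖ and ‖Ax_n‖ → 0, or (b) there exist sequences (x_n), (y_n) of unit vectors and positive reals ε_n → 0, δ_n → 0 such that ‖Tx_n‖ → ‖T‖, ‖Ty_n‖ → ‖T‖, and Ax_n ∈ (Tx_n)^{+(ε_n)} and Ay_n ∈ (Ty_n)^{−(δ_n)} for all n. -/
/-!
Backward direction: along either kind of sequence, `‖(T + λA) xₙ‖` is bounded below by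
quantities tending to `‖T‖`.

Forward direction, assuming (a) fails: there is `ε₀ > 0` with `‖A z‖ ≥ ε₀` for all unit `z`
with `‖T z‖ > ‖T‖ - ε₀`. For `aₙ → 0` pick unit `xₙ` with
`‖(T + aₙA) xₙ‖ > ‖T + aₙA‖ - aₙ² ≥ ‖T‖ - aₙ²`; then `xₙ` almost norms `T`. Put
`f(λ) = ‖T xₙ + λ A xₙ‖`. For `λ ≤ aₙ`, `f(λ) ≥ ‖T xₙ‖ - aₙ‖A‖`; by convexity of `f` the bound
at `aₙ` gives `f(λ) ≥ ‖T xₙ‖ - λ aₙ` for `λ ≥ aₙ`; and for `λ ≥ 2‖T‖/ε₀` the term `λ A xₙ`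
dominates, so `f(λ) ≥ ‖T xₙ‖`. Hence `f(λ) ≥ ‖T xₙ‖ - C aₙ` for all `λ ≥ 0`, which is
`A xₙ ∈ (T xₙ)^{+(εₙ)}` with `εₙ → 0`. Applying this to `-A` gives the other sequence.
-/

open Filter Topology

section
variable {Y : Type*} [NormedAddCommGroup Y] [NormedSpace ℝ Y]

theorem convexOn_norm_add_smul (u v : Y) : ConvexOn ℝ Set.univ fun l : ℝ => ‖u + l • v‖ := by
  have := (convexOn_univ_norm (E := Y)).comp_affineMap (AffineMap.lineMap u (u + v))
  simpa [Function.comp_def, AffineMap.lineMap_apply, add_comm] using this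

theorem norm_sub_div_mul_le_norm_add_smul {u v : Y} {a η l : ℝ} (ha : 0 < a) (hal : a ≤ l)
    (h : ‖u‖ - η ≤ ‖u + a • v‖) : ‖u‖ - l / a * η ≤ ‖u + l • v‖ := by
  have hl : 0 < l := ha.trans_le hal
  have hslope := (convexOn_norm_add_smul u v).secant_mono (a := 0) trivial trivial trivial
    ha.ne' hl.ne' hal
  simp only [zero_smul, add_zero, sub_zero] at hslope
  rw [div_le_div_iff₀ ha hl] at hslope
  calc ‖u‖ - l / a * η = (a * ‖u‖ - l * η) / a := by field_simp
    _ ≤ ‖u + l • v‖ := by rw [div_le_iff₀ ha]; nlinarith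

theorem norm_sub_max_mul_le_norm_add_smul {u v : Y} {a M Λ l : ℝ} (ha : 0 < a)
    (hv : ‖v‖ ≤ M) (hmid : ‖u‖ - a ^ 2 ≤ ‖u + a • v‖) (hlarge : 2 * ‖u‖ ≤ Λ * ‖v‖)
    (hl : 0 ≤ l) : ‖u‖ - max M Λ * a ≤ ‖u + l • v‖ := by
  have hM : 0 ≤ M := (norm_nonneg v).trans hv
  have hmax : 0 ≤ max M Λ * a := mul_nonneg (hM.trans (le_max_left M Λ)) ha.le
  have hlv : ‖l • v‖ = l * ‖v‖ := by rw [norm_smul, Real.norm_of_nonneg hl]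
  rcases le_total l a with hla | hal
  · have h1 := norm_sub_le_norm_add u (l • v)
    have h2 : l * ‖v‖ ≤ a * M := mul_le_mul hla hv (norm_nonneg v) ha.le
    have h3 : a * M ≤ max M Λ * a := by nlinarith [le_max_left M Λ]
    rw [hlv] at h1
    linarith
  rcases le_total l Λ with hlΛ | hΛl
  · have h1 := norm_sub_div_mul_le_norm_add_smul ha hal hmid
    have h2 : l / a * a ^ 2 = l * a := by field_simp
    have h3 : l * a ≤ max M Λ * a := by nlinarith [le_max_right M Λ]
    linarith
  · have h1 := norm_sub_le_norm_add (l • v) u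
    have h2 : Λ * ‖v‖ ≤ l * ‖v‖ := mul_le_mul_of_nonneg_right hΛl (norm_nonneg v)
    rw [hlv, add_comm] at h1
    linarith
end

theorem continuous_sqrt_one_sub_sq : Continuous fun t : ℝ => √(1 - t ^ 2) := by
  fun_prop

theorem exists_pos_tendsto_zero_sqrt_one_sub_sq_mul_le {b c : ℕ → ℝ} {L : ℝ} (hL : 0 < L)
    (hb : Tendsto b atTop (𝓝 L)) (hb0 : ∀ n, 0 ≤ b n) (hc : ∀ n, 0 < c n)
    (hc0 : Tendsto c atTop (𝓝 0)) :
    ∃ ε : ℕ → ℝ, (∀ n, 0 < ε n) ∧ Tendsto ε atTop (𝓝 0) ∧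
      ∀ n, √(1 - ε n ^ 2) * b n ≤ max 0 (b n - c n) := by
  -- `r n` will be `√(1 - ε n ^ 2)`; when `b n = 0` the division gives `0`, so `r n = 0`.
  set r : ℕ → ℝ := fun n => max 0 ((b n - c n) / b n) with hr
  have hr0 : ∀ n, 0 ≤ r n := fun n => le_max_left _ _
  have hr1 : ∀ n, r n < 1 := by
    intro n
    refine max_lt one_pos ?_
    rcases (hb0 n).eq_or_lt with hbn | hbn
    · simp [← hbn]
    · rw [div_lt_one hbn]; linarith [hc n]
  have hrb : ∀ n, r n * b n ≤ max 0 (b n - c n) := by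
    intro n
    rcases (hb0 n).eq_or_lt with hbn | hbn
    · simp [← hbn]
    · rw [hr, max_mul_of_nonneg _ _ hbn.le, zero_mul, div_mul_cancel₀ _ hbn.ne']
  have hrlim : Tendsto r atTop (𝓝 1) := by
    have h := (tendsto_const_nhds (x := (0 : ℝ))).max ((hb.sub hc0).div hb hL.ne')
    rwa [sub_zero, div_self hL.ne', max_eq_right zero_le_one] at h
  refine ⟨fun n => √(1 - r n ^ 2), fun n => Real.sqrt_pos.2 ?_, ?_, fun n => ?_⟩
  · nlinarith [hr0 n, hr1 n]
  · simpa [Function.comp_def] using (continuous_sqrt_one_sub_sq.tendsto 1).comp hrlim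
  · have hsq : √(1 - r n ^ 2) ^ 2 = 1 - r n ^ 2 := Real.sq_sqrt (by nlinarith [hr0 n, hr1 n])
    rw [hsq, sub_sub_cancel, Real.sqrt_sq (hr0 n)]
    exact hrb n

section
variable {X Y : Type*} [NormedAddCommGroup X] [NormedSpace ℝ X]
  [NormedAddCommGroup Y] [NormedSpace ℝ Y]

theorem ContinuousLinearMap.exists_norm_eq_one_lt_apply (S : X →L[ℝ] Y) (hS : S ≠ 0)
    {r : ℝ} (hr : r < ‖S‖) : ∃ x : X, ‖x‖ = 1 ∧ r < ‖S x‖ := by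
  obtain ⟨x, hx1, hrx⟩ := S.exists_lt_apply_of_lt_opNorm (max_lt hr (norm_pos_iff.2 hS))
  have hSx : 0 < ‖S x‖ := (le_max_right r 0).trans_lt hrx
  have hx0 : x ≠ 0 := by rintro rfl; simp at hSx
  refine ⟨‖x‖⁻¹ • x, norm_smul_inv_norm hx0, ?_⟩
  rw [map_smul, norm_smul, norm_inv, norm_norm]
  calc r < ‖S x‖ := (le_max_left r 0).trans_lt hrx
    _ ≤ ‖x‖⁻¹ * ‖S x‖ :=
      le_mul_of_one_le_left hSx.le ((one_le_inv₀ (norm_pos_iff.2 hx0)).2 hx1.le)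

theorem exists_pos_le_norm_apply_of_not_tendsto (T A : X →L[ℝ] Y)
    (h : ¬ ∃ x : ℕ → X, (∀ n, ‖x n‖ = 1) ∧ Tendsto (fun n => ‖T (x n)‖) atTop (𝓝 ‖T‖) ∧
      Tendsto (fun n => ‖A (x n)‖) atTop (𝓝 0)) :
    ∃ ε > 0, ∀ z : X, ‖z‖ = 1 → ‖T‖ - ε < ‖T z‖ → ε ≤ ‖A z‖ := by
  contrapose! h
  choose x hx hTx hAx using fun n : ℕ => h (1 / ((n : ℝ) + 1)) Nat.one_div_pos_of_nat
  have hlim := tendsto_one_div_add_atTop_nhds_zero_nat (𝕜 := ℝ)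
  refine ⟨x, hx, ?_, squeeze_zero (fun n => norm_nonneg _) (fun n => (hAx n).le) hlim⟩
  refine tendsto_of_tendsto_of_tendsto_of_le_of_le ?_ tendsto_const_nhds (fun n => (hTx n).le)
    fun n => T.unit_le_opNorm _ (hx n).le
  simpa using tendsto_const_nhds.sub hlim

theorem exists_seq_norm_eq_one_sub_sq_le_norm_add_smul (T A : X →L[ℝ] Y) (hT : T ≠ 0)
    (horth : ∀ l : ℝ, ‖T‖ ≤ ‖T + l • A‖) {a : ℕ → ℝ} (ha : ∀ n, 0 < a n)
    (ha0 : Tendsto a atTop (𝓝 0)) :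
    ∃ x : ℕ → X, (∀ n, ‖x n‖ = 1) ∧ Tendsto (fun n => ‖T (x n)‖) atTop (𝓝 ‖T‖) ∧
      ∀ n, ‖T (x n)‖ - a n ^ 2 ≤ ‖T (x n) + a n • A (x n)‖ := by
  have hT0 : 0 < ‖T‖ := norm_pos_iff.2 hT
  have hnear : ∀ n, ∃ x : X, ‖x‖ = 1 ∧ ‖T‖ - a n ^ 2 < ‖(T + a n • A) x‖ := fun n =>
    (T + a n • A).exists_norm_eq_one_lt_apply (norm_pos_iff.1 (hT0.trans_le (horth _)))
      ((sub_lt_self _ (pow_pos (ha n) 2)).trans_le (horth _))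
  choose x hx hTAx using hnear
  have hTx : ∀ n, ‖T (x n)‖ ≤ ‖T‖ := fun n => T.unit_le_opNorm _ (hx n).le
  refine ⟨x, hx, ?_, fun n => (sub_le_sub_right (hTx n) _).trans (hTAx n).le⟩
  have hlower : ∀ n, ‖T‖ - a n ^ 2 - a n * ‖A‖ ≤ ‖T (x n)‖ := by
    intro n
    have h1 : ‖a n • A (x n)‖ ≤ a n * ‖A‖ := by
      rw [norm_smul, Real.norm_of_nonneg (ha n).le]
      exact mul_le_mul_of_nonneg_left (A.unit_le_opNorm _ (hx n).le) (ha n).le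
    have h2 := norm_add_le (T (x n)) (a n • A (x n))
    have h3 : ‖T‖ - a n ^ 2 < ‖T (x n) + a n • A (x n)‖ := hTAx n
    linarith
  refine tendsto_of_tendsto_of_tendsto_of_le_of_le ?_ tendsto_const_nhds hlower hTx
  simpa using (tendsto_const_nhds.sub (ha0.pow 2)).sub (ha0.mul_const ‖A‖)

theorem exists_seq_sqrt_one_sub_sq_mul_le_norm_add_smul_of_nonneg (T A : X →L[ℝ] Y)
    (hT : T ≠ 0) (horth : ∀ l : ℝ, ‖T‖ ≤ ‖T + l • A‖)
    (hA : ∃ ε > 0, ∀ z : X, ‖z‖ = 1 → ‖T‖ - ε < ‖T z‖ → ε ≤ ‖A z‖) :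
    ∃ (x : ℕ → X) (ε : ℕ → ℝ), (∀ n, ‖x n‖ = 1) ∧ (∀ n, 0 < ε n) ∧
      Tendsto ε atTop (𝓝 0) ∧ Tendsto (fun n => ‖T (x n)‖) atTop (𝓝 ‖T‖) ∧
      ∀ n, ∀ l : ℝ, 0 ≤ l → √(1 - ε n ^ 2) * ‖T (x n)‖ ≤ ‖T (x n) + l • A (x n)‖ := by
  obtain ⟨ε₀, hε₀, hlow⟩ := hA
  have hT0 : 0 < ‖T‖ := norm_pos_iff.2 hT
  set a : ℕ → ℝ := fun n => 1 / ((n : ℝ) + 1)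
  have ha : ∀ n, 0 < a n := fun n => Nat.one_div_pos_of_nat
  have ha0 : Tendsto a atTop (𝓝 0) := tendsto_one_div_add_atTop_nhds_zero_nat
  obtain ⟨x, hx, hTx, hmid⟩ :=
    exists_seq_norm_eq_one_sub_sq_le_norm_add_smul T A hT horth ha ha0
  obtain ⟨φ, hφ, hφlow⟩ :=
    extraction_of_eventually_atTop (hTx.eventually (lt_mem_nhds (sub_lt_self _ hε₀)))
  -- Along the subsequence `‖A (x n)‖ ≥ ε₀`, so beyond `Λ` the term `l • A (x n)` dominates.
  set Λ := 2 * ‖T‖ / ε₀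
  set C := max ‖A‖ Λ
  have hC : 0 < C := lt_max_of_lt_right (by positivity)
  have hbound : ∀ n, ∀ l : ℝ, 0 ≤ l →
      ‖T (x (φ n))‖ - C * a (φ n) ≤ ‖T (x (φ n)) + l • A (x (φ n))‖ := by
    intro n l hl
    refine norm_sub_max_mul_le_norm_add_smul (ha _) (A.unit_le_opNorm _ (hx _).le) (hmid _)
      ?_ hl
    calc 2 * ‖T (x (φ n))‖ ≤ Λ * ε₀ := by
          rw [div_mul_cancel₀ _ hε₀.ne']; linarith [T.unit_le_opNorm _ (hx (φ n)).le]
      _ ≤ Λ * ‖A (x (φ n))‖ := by gcongr; exact hlow _ (hx _) (hφlow n)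
  obtain ⟨ε, hε, hε0, hεle⟩ := exists_pos_tendsto_zero_sqrt_one_sub_sq_mul_le hT0
    (hTx.comp hφ.tendsto_atTop) (fun n => norm_nonneg _) (c := fun n => C * a (φ n))
    (fun n => mul_pos hC (ha _))
    (by simpa using (ha0.comp hφ.tendsto_atTop).const_mul C)
  exact ⟨x ∘ φ, ε, fun n => hx _, hε, hε0, hTx.comp hφ.tendsto_atTop,
    fun n l hl => (hεle n).trans (max_le (norm_nonneg _) (hbound n l hl))⟩

theorem exists_seq_sqrt_one_sub_sq_mul_le_norm_add_smul_of_nonpos (T A : X →L[ℝ] Y)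
    (hT : T ≠ 0) (horth : ∀ l : ℝ, ‖T‖ ≤ ‖T + l • A‖)
    (hA : ∃ ε > 0, ∀ z : X, ‖z‖ = 1 → ‖T‖ - ε < ‖T z‖ → ε ≤ ‖A z‖) :
    ∃ (y : ℕ → X) (δ : ℕ → ℝ), (∀ n, ‖y n‖ = 1) ∧ (∀ n, 0 < δ n) ∧
      Tendsto δ atTop (𝓝 0) ∧ Tendsto (fun n => ‖T (y n)‖) atTop (𝓝 ‖T‖) ∧
      ∀ n, ∀ l : ℝ, l ≤ 0 → √(1 - δ n ^ 2) * ‖T (y n)‖ ≤ ‖T (y n) + l • A (y n)‖ := by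
  have horth' : ∀ l : ℝ, ‖T‖ ≤ ‖T + l • -A‖ := fun l => by simpa using horth (-l)
  have hA' : ∃ ε > 0, ∀ z : X, ‖z‖ = 1 → ‖T‖ - ε < ‖T z‖ → ε ≤ ‖(-A) z‖ := by simpa using hA
  obtain ⟨y, δ, hy, hδ, hδ0, hTy, hle⟩ :=
    exists_seq_sqrt_one_sub_sq_mul_le_norm_add_smul_of_nonneg T (-A) hT horth' hA'
  refine ⟨y, δ, hy, hδ, hδ0, hTy, fun n l hl => ?_⟩
  simpa using hle n (-l) (neg_nonneg.2 hl)

theorem le_opNorm_of_tendsto {S : X →L[ℝ] Y} {x : ℕ → X} (hx : ∀ n, ‖x n‖ = 1) {b : ℕ → ℝ}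
    {L : ℝ} (hb : Tendsto b atTop (𝓝 L)) (hle : ∀ n, b n ≤ ‖S (x n)‖) : L ≤ ‖S‖ :=
  le_of_tendsto' hb fun n => (hle n).trans (S.unit_le_opNorm _ (hx n).le)

theorem opNorm_le_of_sqrt_one_sub_sq_mul_le {T S : X →L[ℝ] Y} {x : ℕ → X} {ε : ℕ → ℝ}
    (hx : ∀ n, ‖x n‖ = 1) (hε : Tendsto ε atTop (𝓝 0))
    (hTx : Tendsto (fun n => ‖T (x n)‖) atTop (𝓝 ‖T‖))
    (hle : ∀ n, √(1 - ε n ^ 2) * ‖T (x n)‖ ≤ ‖S (x n)‖) : ‖T‖ ≤ ‖S‖ := by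
  refine le_opNorm_of_tendsto hx ?_ hle
  simpa [Function.comp_def] using ((continuous_sqrt_one_sub_sq.tendsto 0).comp hε).mul hTx

end

theorem stmt_6 {X Y : Type*} [NormedAddCommGroup X] [NormedSpace ℝ X]
    [NormedAddCommGroup Y] [NormedSpace ℝ Y]
    (T : X →L[ℝ] Y) (hT : T ≠ 0) (A : X →L[ℝ] Y) :
    (∀ l : ℝ, ‖T‖ ≤ ‖T + l • A‖) ↔
      ((∃ x : ℕ → X, (∀ n, ‖x n‖ = 1) ∧
          Filter.Tendsto (fun n => ‖T (x n)‖) Filter.atTop (nhds ‖T‖) ∧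
          Filter.Tendsto (fun n => ‖A (x n)‖) Filter.atTop (nhds 0)) ∨
        (∃ (x y : ℕ → X) (ε δ : ℕ → ℝ),
          (∀ n, ‖x n‖ = 1) ∧ (∀ n, ‖y n‖ = 1) ∧
          (∀ n, 0 < ε n) ∧ (∀ n, 0 < δ n) ∧
          Filter.Tendsto ε Filter.atTop (nhds 0) ∧
          Filter.Tendsto δ Filter.atTop (nhds 0) ∧
          Filter.Tendsto (fun n => ‖T (x n)‖) Filter.atTop (nhds ‖T‖) ∧
          Filter.Tendsto (fun n => ‖T (y n)‖) Filter.atTop (nhds ‖T‖) ∧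
          (∀ n, ∀ l : ℝ, 0 ≤ l →
            Real.sqrt (1 - (ε n) ^ 2) * ‖T (x n)‖ ≤ ‖T (x n) + l • A (x n)‖) ∧
          (∀ n, ∀ l : ℝ, l ≤ 0 →
            Real.sqrt (1 - (δ n) ^ 2) * ‖T (y n)‖ ≤ ‖T (y n) + l • A (y n)‖))) := by
  constructor
  · intro horth
    refine or_iff_not_imp_left.2 fun hnot => ?_
    have hA := exists_pos_le_norm_apply_of_not_tendsto T A hnot
    obtain ⟨x, ε, hx, hε, hε0, hTx, hxle⟩ :=
      exists_seq_sqrt_one_sub_sq_mul_le_norm_add_smul_of_nonneg T A hT horth hA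
    obtain ⟨y, δ, hy, hδ, hδ0, hTy, hyle⟩ :=
      exists_seq_sqrt_one_sub_sq_mul_le_norm_add_smul_of_nonpos T A hT horth hA
    exact ⟨x, y, ε, δ, hx, hy, hε, hδ, hε0, hδ0, hTx, hTy, hxle, hyle⟩
  · rintro (⟨x, hx, hTx, hAx⟩ | ⟨x, y, ε, δ, hx, hy, -, -, hε0, hδ0, hTx, hTy, hxle, hyle⟩) l
    · refine le_opNorm_of_tendsto hx (b := fun n => ‖T (x n)‖ - |l| * ‖A (x n)‖) ?_ fun n => ?_
      · simpa using hTx.sub (hAx.const_mul |l|)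
      · simpa [norm_smul] using norm_sub_le_norm_add (T (x n)) (l • A (x n))
    · rcases le_total 0 l with hl | hl
      · exact opNorm_le_of_sqrt_one_sub_sq_mul_le hx hε0 hTx fun n => hxle n l hl
      · exact opNorm_le_of_sqrt_one_sub_sq_mul_le hy hδ0 hTy fun n => hyle n l hl
end

section
/- For real numbers x, y and any ε ∈ [0,1): the condition |x + λy| ≥ √(1−ε²)·|x| for all λ ≥ 0 holds if and only if xy ≥ 0. Similarly, |x + λy| ≥ √(1−ε²)·|x| for all λ ≤ 0 holds if and only if xy ≤ 0. -/
lemma key_7 (x y : ℝ) (ε : ℝ) (hε : 0 ≤ ε) (hε1 : ε < 1) :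
    (∀ l : ℝ, 0 ≤ l → Real.sqrt (1 - ε ^ 2) * |x| ≤ |x + l * y|) ↔ 0 ≤ x * y := by
  constructor
  · intro h
    by_contra hxy
    push_neg at hxy
    have hy : y ≠ 0 := by rintro rfl; simp at hxy
    have hx : x ≠ 0 := by rintro rfl; simp at hxy
    have hl : 0 ≤ -x / y := by
      rcases lt_trichotomy y 0 with hy' | hy' | hy'
      · exact le_of_lt (div_pos_of_neg_of_neg (by nlinarith) hy')
      · exact absurd hy' (by simpa using hy)
      · exact div_nonneg (by nlinarith) hy'.le
    have := h (-x / y) hl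
    rw [div_mul_cancel₀ _ hy] at this
    simp only [add_neg_cancel, abs_zero] at this
    have h1 : 0 < Real.sqrt (1 - ε ^ 2) := Real.sqrt_pos.mpr (by nlinarith)
    have h2 : 0 < |x| := abs_pos.mpr hx
    nlinarith
  · intro hxy l hl
    have h1 : Real.sqrt (1 - ε ^ 2) ≤ 1 := by
      exact Real.sqrt_le_one.mpr (by nlinarith)
    have h2 : |x| ≤ |x + l * y| := by
      have hz : 0 ≤ x * (l * y) := by nlinarith
      rcases abs_cases x with ⟨e1, _⟩ | ⟨e1, _⟩ <;>
        rcases abs_cases (x + l * y) with ⟨e2, _⟩ | ⟨e2, _⟩ <;> nlinarith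
    calc Real.sqrt (1 - ε ^ 2) * |x| ≤ 1 * |x| := by
          have := abs_nonneg x; nlinarith
      _ ≤ |x + l * y| := by linarith

theorem stmt_7 (x y : ℝ) (ε : ℝ) (hε : 0 ≤ ε) (hε1 : ε < 1) :
    ((∀ l : ℝ, 0 ≤ l → Real.sqrt (1 - ε ^ 2) * |x| ≤ |x + l * y|) ↔ 0 ≤ x * y) ∧
    ((∀ l : ℝ, l ≤ 0 → Real.sqrt (1 - ε ^ 2) * |x| ≤ |x + l * y|) ↔ x * y ≤ 0) := by
  refine ⟨key_7 x y ε hε hε1, ?_⟩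
  have := key_7 x (-y) ε hε hε1
  constructor
  · intro h
    have h0 : 0 ≤ x * (-y) := this.mp (fun l hl => by
      have := h (-l) (by linarith)
      simpa [neg_mul, mul_neg] using this)
    nlinarith
  · intro hxy l hl
    have h0 := this.mpr (by nlinarith) (-l) (by linarith)
    simpa [neg_mul, mul_neg] using h0
end

section
/- Let X, Y be normed linear spaces and T a bounded linear operator whose norm attainment set is M_T = {x₀, −x₀} for a unit vector x₀, and which satisfies: for every δ > 0, if {H_α} is the collection of all hyperplanes through the origin (kernels of nonzero bounded linear functionals) with d(x₀, H_α) > δ, then sup{‖Tx‖ : x a unit vector in some H_α} < ‖T‖. Then for any bounded operator A, T ⊥_B A if and only if Tx₀ ⊥_B Ax₀. -/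
/-!
If `T ⊥_B A`, then for small `t > 0` a unit vector `x` almost norming `T + (t * l) • A` also almost
norms `T`, and by convexity of `s ↦ ‖(T + s • A) x‖` we get `‖(T + l • A) x‖ ≥ ‖T‖ - t`.
The hyperplane condition forces such almost norming vectors to lie near `±x₀`: a unit vector `x`
at distance `≥ ρ` from `±x₀` lies on a line at distance `≥ ρ / 2` from `x₀`, and Hahn–Banach on
`X ⧸ ℝ ∙ x` turns that line into a hyperplane through `x` just as far from `x₀`. Letting `t → 0`
gives `‖T x₀ + l • A x₀‖ ≥ ‖T‖`. The same estimate for `A = 0` shows `‖T x₀‖ = ‖T‖`, from which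
the converse is immediate.
-/

open Metric

section Geometry

variable {X : Type*} [NormedAddCommGroup X] [NormedSpace ℝ X]

lemma norm_sub_le_two_mul_norm_sub_smul {x x₀ : X} (hx : ‖x‖ = 1) (hx₀ : ‖x₀‖ = 1) {t : ℝ}
    (ht : 0 ≤ t) : ‖x₀ - x‖ ≤ 2 * ‖x₀ - t • x‖ := by
  have hscale : |1 - t| ≤ ‖x₀ - t • x‖ := by
    simpa [norm_smul, hx, hx₀, abs_of_nonneg ht] using abs_norm_sub_norm_le x₀ (t • x)
  calc ‖x₀ - x‖ = ‖(x₀ - t • x) - (1 - t) • x‖ := by congr 1; module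
    _ ≤ ‖x₀ - t • x‖ + |1 - t| := by
      grw [norm_sub_le, norm_smul, hx, Real.norm_eq_abs, mul_one]
    _ ≤ 2 * ‖x₀ - t • x‖ := by linarith

lemma le_two_mul_infDist_span_singleton {x x₀ : X} (hx : ‖x‖ = 1) (hx₀ : ‖x₀‖ = 1) {ρ : ℝ}
    (hsub : ρ ≤ ‖x₀ - x‖) (hadd : ρ ≤ ‖x₀ + x‖) : ρ ≤ 2 * infDist x₀ (ℝ ∙ x : Submodule ℝ X) := by
  rw [← div_le_iff₀' two_pos, le_infDist ⟨0, (ℝ ∙ x).zero_mem⟩]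
  intro y hy
  obtain ⟨t, rfl⟩ := Submodule.mem_span_singleton.mp hy
  rw [dist_eq_norm, div_le_iff₀' two_pos]
  rcases le_total 0 t with ht | ht
  · exact hsub.trans (norm_sub_le_two_mul_norm_sub_smul hx hx₀ ht)
  · have h :=
      norm_sub_le_two_mul_norm_sub_smul (x := -x) (by rwa [norm_neg]) hx₀ (neg_nonneg.mpr ht)
    rw [sub_neg_eq_add, neg_smul_neg] at h
    exact hadd.trans h

lemma exists_dual_eq_infDist (S : Submodule ℝ X) (x₀ : X) :
    ∃ f : X →L[ℝ] ℝ, ‖f‖ ≤ 1 ∧ (∀ s ∈ S, f s = 0) ∧ f x₀ = infDist x₀ S := by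
  obtain ⟨g, hg, hgx₀⟩ := exists_dual_vector'' ℝ (S.mkQ x₀)
  have hq : ‖S.mkQL‖ ≤ 1 :=
    S.mkQL.opNorm_le_bound zero_le_one fun m => by
      simpa using Submodule.Quotient.norm_mk_le S m
  refine ⟨g.comp S.mkQL, ?_, fun s hs => ?_, ?_⟩
  · calc ‖g.comp S.mkQL‖ ≤ ‖g‖ * ‖S.mkQL‖ := g.opNorm_comp_le _
      _ ≤ 1 := mul_le_one₀ hg (ContinuousLinearMap.opNorm_nonneg _) hq
  · simp [(Submodule.Quotient.mk_eq_zero S).mpr hs]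
  · show g (S.mkQ x₀) = _
    rw [hgx₀]
    exact QuotientAddGroup.norm_mk (S := S.toAddSubgroup) x₀

lemma le_infDist_ker {f : X →L[ℝ] ℝ} (hf : ‖f‖ ≤ 1) (x : X) : f x ≤ infDist x {h | f h = 0} := by
  rw [le_infDist (s := {h | f h = 0}) ⟨0, map_zero f⟩]
  intro h hh
  calc f x = f (x - h) := by rw [map_sub, hh, sub_zero]
    _ ≤ ‖f (x - h)‖ := Real.le_norm_self _
    _ ≤ ‖f‖ * ‖x - h‖ := f.le_opNorm _
    _ ≤ dist x h := by rw [dist_eq_norm]; exact mul_le_of_le_one_left (norm_nonneg _) hf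

lemma exists_ne_zero_apply_eq_zero_lt_infDist_ker {x x₀ : X} (hx : ‖x‖ = 1) (hx₀ : ‖x₀‖ = 1)
    {ρ : ℝ} (hρ : 0 < ρ) (hsub : ρ ≤ ‖x₀ - x‖) (hadd : ρ ≤ ‖x₀ + x‖) :
    ∃ f : X →L[ℝ] ℝ, f ≠ 0 ∧ f x = 0 ∧ ρ / 4 < infDist x₀ {h | f h = 0} := by
  obtain ⟨f, hf, hfS, hfx₀⟩ := exists_dual_eq_infDist (ℝ ∙ x) x₀
  have hline := le_two_mul_infDist_span_singleton hx hx₀ hsub hadd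
  refine ⟨f, ?_, hfS x (Submodule.mem_span_singleton_self x), ?_⟩
  · rintro rfl
    rw [zero_apply] at hfx₀
    linarith
  · linarith [le_infDist_ker hf x₀]

end Geometry

section Operators

variable {X Y : Type*} [NormedAddCommGroup X] [NormedSpace ℝ X]
  [NormedAddCommGroup Y] [NormedSpace ℝ Y]

def StronglyAttainsNormAt (T : X →L[ℝ] Y) (x₀ : X) : Prop :=
  ∀ ρ > 0, ∃ m < ‖T‖, ∀ x : X, ‖x‖ = 1 → m < ‖T x‖ → ‖x - x₀‖ < ρ ∨ ‖x + x₀‖ < ρ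

lemma StronglyAttainsNormAt.of_norm_le_on_far_hyperplanes {T : X →L[ℝ] Y} {x₀ : X} (hx₀ : ‖x₀‖ = 1)
    (h : ∀ δ : ℝ, 0 < δ → ∃ m : ℝ, m < ‖T‖ ∧ ∀ x : X, ‖x‖ = 1 →
      (∃ f : X →L[ℝ] ℝ, f ≠ 0 ∧ f x = 0 ∧ δ < infDist x₀ {h : X | f h = 0}) → ‖T x‖ ≤ m) :
    StronglyAttainsNormAt T x₀ := by
  intro ρ hρ
  obtain ⟨m, hm, hfar⟩ := h (ρ / 4) (by positivity)
  refine ⟨m, hm, fun x hx hTx => ?_⟩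
  by_contra! hnear
  have := hfar x hx <| exists_ne_zero_apply_eq_zero_lt_infDist_ker hx hx₀ hρ
    (by rw [norm_sub_rev]; exact hnear.1) (by rw [add_comm]; exact hnear.2)
  linarith

lemma ContinuousLinearMap.exists_norm_eq_one_lt_norm_apply [Nontrivial X] (S : X →L[ℝ] Y)
    {r : ℝ} (hr : r < ‖S‖) : ∃ x : X, ‖x‖ = 1 ∧ r < ‖S x‖ := by
  rcases lt_or_ge r 0 with hr₀ | hr₀
  · obtain ⟨x, hx⟩ := exists_norm_eq X zero_le_one
    exact ⟨x, hx, hr₀.trans_le (norm_nonneg _)⟩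
  · lift r to NNReal using hr₀
    obtain ⟨x, hx, hSx⟩ := S.exists_nnnorm_eq_one_lt_apply_of_lt_opNNNorm hr
    exact ⟨x, congrArg NNReal.toReal hx, hSx⟩

lemma norm_add_smul_le (u v : Y) {t : ℝ} (ht₀ : 0 ≤ t) (ht₁ : t ≤ 1) :
    ‖u + t • v‖ ≤ (1 - t) * ‖u‖ + t * ‖u + v‖ := by
  calc ‖u + t • v‖ = ‖(1 - t) • u + t • (u + v)‖ := by congr 1; module
    _ ≤ (1 - t) * ‖u‖ + t * ‖u + v‖ := by
      grw [norm_add_le, norm_smul, norm_smul, Real.norm_of_nonneg ht₀,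
        Real.norm_of_nonneg (sub_nonneg.2 ht₁)]

lemma exists_almost_norming_of_forall_norm_le_norm_add_smul [Nontrivial X] {T A : X →L[ℝ] Y}
    (hTA : ∀ s : ℝ, ‖T‖ ≤ ‖T + s • A‖) (l : ℝ) {t : ℝ} (ht₀ : 0 < t) (ht₁ : t ≤ 1) :
    ∃ x : X, ‖x‖ = 1 ∧ ‖T‖ - t ≤ ‖(T + l • A) x‖ ∧ ‖T‖ - t * (1 + ‖l • A‖) < ‖T x‖ := by
  obtain ⟨x, hx, hlt⟩ := (T + (t * l) • A).exists_norm_eq_one_lt_norm_apply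
    (sub_lt_self _ (pow_pos ht₀ 2))
  have hTx : ‖T x‖ ≤ ‖T‖ := T.unit_le_opNorm x hx.le
  have hAx : ‖(l • A) x‖ ≤ ‖l • A‖ := (l • A).unit_le_opNorm x hx.le
  have happ : (T + (t * l) • A) x = T x + t • (l • A) x := by
    simp [mul_smul]
  have hnorming : ‖T‖ - t ^ 2 < ‖T x + t • (l • A) x‖ := by
    linarith [hTA (t * l), happ ▸ hlt]
  refine ⟨x, hx, ?_, ?_⟩
  · have hconv := norm_add_smul_le (T x) ((l • A) x) ht₀.le ht₁
    rw [show T x + (l • A) x = (T + l • A) x from rfl] at hconv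
    have hmul : t * (‖T‖ - t) ≤ t * ‖(T + l • A) x‖ := by
      nlinarith [mul_le_mul_of_nonneg_left hTx (sub_nonneg.2 ht₁)]
    exact le_of_mul_le_mul_left hmul ht₀
  · have hsmul : ‖t • (l • A) x‖ ≤ t * ‖l • A‖ := by
      rw [norm_smul, Real.norm_of_nonneg ht₀.le]
      exact mul_le_mul_of_nonneg_left hAx ht₀.le
    nlinarith [norm_add_le (T x) (t • (l • A) x)]

theorem StronglyAttainsNormAt.norm_le_norm_apply_add_smul {T A : X →L[ℝ] Y} {x₀ : X}
    (hT : StronglyAttainsNormAt T x₀) (hTA : ∀ s : ℝ, ‖T‖ ≤ ‖T + s • A‖) (l : ℝ) :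
    ‖T‖ ≤ ‖T x₀ + l • A x₀‖ := by
  rcases subsingleton_or_nontrivial X with _ | _
  · rw [T.opNorm_subsingleton]
    exact norm_nonneg _
  set B := T + l • A
  change ‖T‖ ≤ ‖B x₀‖
  suffices h : ∀ ρ > 0, ‖T‖ ≤ ‖B x₀‖ + ρ * (1 + ‖B‖) by
    refine le_of_forall_pos_le_add fun ε hε => ?_
    simpa [div_mul_cancel₀, (by positivity : (1 + ‖B‖) ≠ 0)] using h (ε / (1 + ‖B‖)) (by positivity)
  intro ρ hρ
  obtain ⟨m, hm, hnear⟩ := hT ρ hρ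
  set t := min (min ρ 1) ((‖T‖ - m) / (1 + ‖l • A‖))
  have ht₀ : 0 < t := lt_min (lt_min hρ one_pos) (div_pos (sub_pos.2 hm) (by positivity))
  have ht₁ : t ≤ 1 := (min_le_left _ _).trans (min_le_right _ _)
  have htρ : t ≤ ρ := (min_le_left _ _).trans (min_le_left _ _)
  have htm : t * (1 + ‖l • A‖) ≤ ‖T‖ - m := (le_div_iff₀ (by positivity)).1 (min_le_right _ _)
  obtain ⟨x, hx, hBx, hTx⟩ := exists_almost_norming_of_forall_norm_le_norm_add_smul hTA l ht₀ ht₁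
  obtain ⟨y, hBy, hy⟩ : ∃ y, ‖B y‖ = ‖B x‖ ∧ ‖y - x₀‖ < ρ := by
    rcases hnear x hx (by linarith) with h | h
    · exact ⟨x, rfl, h⟩
    · refine ⟨-x, by rw [map_neg, norm_neg], ?_⟩
      rwa [show -x - x₀ = -(x + x₀) by abel, norm_neg]
  have hlip : ‖B y‖ ≤ ‖B x₀‖ + ‖B‖ * ‖y - x₀‖ := by
    have := B.le_opNorm (y - x₀)
    rw [map_sub] at this
    linarith [norm_le_norm_add_norm_sub' (B y) (B x₀)]
  linarith [mul_le_mul_of_nonneg_left hy.le (norm_nonneg B)]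

end Operators

theorem stmt_13_general {X Y : Type*} [NormedAddCommGroup X] [NormedSpace ℝ X]
    [NormedAddCommGroup Y] [NormedSpace ℝ Y]
    (T : X →L[ℝ] Y) (x₀ : X) (hx₀ : ‖x₀‖ = 1)
    (hhyp : ∀ δ : ℝ, 0 < δ → ∃ m : ℝ, m < ‖T‖ ∧ ∀ x : X, ‖x‖ = 1 →
      (∃ f : X →L[ℝ] ℝ, f ≠ 0 ∧ f x = 0 ∧
        δ < Metric.infDist x₀ {h : X | f h = 0}) → ‖T x‖ ≤ m)
    (A : X →L[ℝ] Y) :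
    (∀ l : ℝ, ‖T‖ ≤ ‖T + l • A‖) ↔ (∀ l : ℝ, ‖T x₀‖ ≤ ‖T x₀ + l • A x₀‖) := by
  have hT := StronglyAttainsNormAt.of_norm_le_on_far_hyperplanes hx₀ hhyp
  constructor
  · intro hTA l
    exact (T.unit_le_opNorm x₀ hx₀.le).trans (hT.norm_le_norm_apply_add_smul hTA l)
  · intro hTAx₀ l
    have hnorm : ‖T‖ ≤ ‖T x₀‖ := by
      simpa using hT.norm_le_norm_apply_add_smul (A := 0) (by simp) 0
    calc ‖T‖ ≤ ‖T x₀ + l • A x₀‖ := hnorm.trans (hTAx₀ l)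
      _ = ‖(T + l • A) x₀‖ := rfl
      _ ≤ ‖T + l • A‖ := (T + l • A).unit_le_opNorm x₀ hx₀.le

theorem stmt_13 {X Y : Type*} [NormedAddCommGroup X] [NormedSpace ℝ X]
    [NormedAddCommGroup Y] [NormedSpace ℝ Y]
    (T : X →L[ℝ] Y) (x₀ : X) (hx₀ : ‖x₀‖ = 1)
    (hMT : ∀ x : X, ‖x‖ = 1 → (‖T x‖ = ‖T‖ ↔ x = x₀ ∨ x = -x₀))
    (hhyp : ∀ δ : ℝ, 0 < δ → ∃ m : ℝ, m < ‖T‖ ∧ ∀ x : X, ‖x‖ = 1 →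
      (∃ f : X →L[ℝ] ℝ, f ≠ 0 ∧ f x = 0 ∧
        δ < Metric.infDist x₀ {h : X | f h = 0}) → ‖T x‖ ≤ m)
    (A : X →L[ℝ] Y) :
    (∀ l : ℝ, ‖T‖ ≤ ‖T + l • A‖) ↔ (∀ l : ℝ, ‖T x₀‖ ≤ ‖T x₀ + l • A x₀‖) :=
  stmt_13_general T x₀ hx₀ hhyp A
end

section
/- Let X, Y be normed linear spaces and T a bounded linear operator such that: (i) M_T = {x₀, −x₀} for a unit vector x₀; (ii) Tx₀ is a smooth point of Y; (iii) for every δ > 0, if {H_α} is the collection of hyperplanes through the origin with d(x₀, H_α) > δ then sup{‖Tx‖ : x a unit vector in ∪_α H_α} < ‖T‖. Then T is a smooth point of B(X,Y), i.e., Birkhoff-James orthogonality from T is right-additive: T ⊥_B A₁ and T ⊥_B A₂ imply T ⊥_B (A₁ + A₂). -/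
open Metric

-- Hahn–Banach: if x₀ is at distance > δ from the line through x, there is a
-- hyperplane (kernel of f) containing x at distance > δ from x₀.
lemma aux_hb {X : Type*} [NormedAddCommGroup X] [NormedSpace ℝ X]
    (x₀ x : X) (δ : ℝ) (hδ : 0 < δ)
    (hd : δ < Metric.infDist x₀ (Submodule.span ℝ {x} : Set X)) :
    ∃ f : X →L[ℝ] ℝ, f ≠ 0 ∧ f x = 0 ∧
      δ < Metric.infDist x₀ {h : X | f h = 0} := by
  set S : Set X := (Submodule.span ℝ {x} : Set X) with hS
  set d := Metric.infDist x₀ S with hdd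
  set δ' : ℝ := (δ + d) / 2 with hδ'
  have hδ'δ : δ < δ' := by simp only [hδ']; linarith
  have hδ'd : δ' < d := by simp only [hδ']; linarith
  have hδ'0 : 0 < δ' := hδ.trans hδ'δ
  have hSconv : Convex ℝ S := (Submodule.span ℝ {x}).convex
  have hconv : Convex ℝ (cthickening δ' S) := hSconv.cthickening δ'
  have hclosed : IsClosed (cthickening δ' S) := isClosed_cthickening
  have hx₀mem : x₀ ∉ cthickening δ' S := by
    intro hmem
    have h1 := Metric.mem_cthickening_iff.mp hmem
    have h2 := ENNReal.toReal_mono (by simp) h1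
    rw [ENNReal.toReal_ofReal hδ'0.le] at h2
    have : Metric.infDist x₀ S ≤ δ' := by
      simpa [Metric.infDist] using h2
    linarith
  obtain ⟨f, u, hfu, hux₀⟩ := geometric_hahn_banach_closed_point hconv hclosed hx₀mem
  have hSsub : S ⊆ cthickening δ' S := self_subset_cthickening S
  have h0S : (0 : X) ∈ S := by simp [hS]
  have hu0 : 0 < u := by
    have := hfu 0 (hSsub h0S)
    simpa using this
  -- f x = 0
  have hfx : f x = 0 := by
    by_contra hne
    have hxS : ∀ t : ℝ, t • x ∈ S := by
      intro t
      exact Submodule.smul_mem _ t (Submodule.mem_span_singleton_self x)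
    have := hfu (((u + 1) / f x) • x) (hSsub (hxS _))
    rw [map_smul] at this
    simp only [smul_eq_mul] at this
    rw [div_mul_cancel₀ _ hne] at this
    linarith
  -- norm bound : ‖f‖ ≤ u / δ'
  have hfnorm : ‖f‖ ≤ u / δ' := by
    apply ContinuousLinearMap.opNorm_le_bound _ (by positivity)
    intro y
    rcases eq_or_ne y 0 with rfl | hy0
    · simp
    · have hyn : 0 < ‖y‖ := norm_pos_iff.mpr hy0
      have hball : ∀ z : X, ‖z‖ ≤ δ' → f z < u := by
        intro z hz
        apply hfu
        apply mem_cthickening_of_dist_le z 0 δ' S h0S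
        simpa [dist_eq_norm] using hz
      have h1 : f ((δ' / ‖y‖) • y) < u := by
        apply hball; rw [norm_smul]
        simp only [Real.norm_eq_abs, abs_of_pos (div_pos hδ'0 hyn)]
        rw [div_mul_cancel₀ _ hyn.ne']
      have h2 : f ((δ' / ‖y‖) • (-y)) < u := by
        apply hball; rw [norm_smul]
        simp only [Real.norm_eq_abs, abs_of_pos (div_pos hδ'0 hyn), norm_neg]
        rw [div_mul_cancel₀ _ hyn.ne']
      rw [map_smul, smul_eq_mul] at h1
      rw [map_smul, map_neg, smul_eq_mul] at h2
      have h1' : δ' * f y < u * ‖y‖ := by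
        have h := mul_lt_mul_of_pos_right h1 hyn
        have e : δ' / ‖y‖ * f y * ‖y‖ = δ' * f y := by field_simp
        rw [e] at h; exact h
      have h2' : δ' * (- f y) < u * ‖y‖ := by
        have h := mul_lt_mul_of_pos_right h2 hyn
        have e : δ' / ‖y‖ * (- f y) * ‖y‖ = δ' * (- f y) := by field_simp
        rw [e] at h; exact h
      have hgoal : u / δ' * ‖y‖ = u * ‖y‖ / δ' := by ring
      rw [Real.norm_eq_abs, hgoal, le_div_iff₀ hδ'0]
      rcases abs_cases (f y) with ⟨he, _⟩ | ⟨he, _⟩ <;> rw [he] <;> nlinarith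
  have hf0 : f ≠ 0 := by
    intro h
    rw [h] at hux₀
    simp at hux₀
    linarith
  refine ⟨f, hf0, hfx, ?_⟩
  have hfn0 : 0 < ‖f‖ := norm_pos_iff.mpr hf0
  -- every h in ker f is far from x₀
  have hker : ∀ h : X, f h = 0 → δ' < dist x₀ h := by
    intro h hh
    have h1 : f x₀ - 0 ≤ ‖f‖ * ‖x₀ - h‖ := by
      rw [← hh, ← map_sub]
      exact le_trans (le_abs_self _) (f.le_opNorm _)
    have h2 : δ' * ‖f‖ < f x₀ := by
      have : ‖f‖ * δ' ≤ u := by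
        rw [le_div_iff₀ hδ'0] at hfnorm; linarith
      nlinarith
    rw [dist_eq_norm]
    nlinarith
  by_contra hle
  push_neg at hle
  obtain ⟨h, hh, hdist⟩ := (Metric.infDist_lt_iff ⟨0, by simp⟩).mp (lt_of_le_of_lt hle hδ'δ)
  exact absurd hdist (not_lt.mpr (hker h hh).le)

-- if x₀ is close to the line through x (both unit), then x is close to ±x₀
lemma aux_near {X : Type*} [NormedAddCommGroup X] [NormedSpace ℝ X]
    (x₀ x : X) (δ : ℝ) (hδ : 0 < δ) (hx : ‖x‖ = 1) (hx₀ : ‖x₀‖ = 1)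
    (hd : Metric.infDist x₀ (Submodule.span ℝ {x} : Set X) ≤ δ) :
    ∃ s : ℝ, (s = 1 ∨ s = -1) ∧ ‖s • x - x₀‖ ≤ 3 * δ := by
  have hne : (Submodule.span ℝ {x} : Set X).Nonempty := ⟨0, by simp⟩
  have hlt : Metric.infDist x₀ (Submodule.span ℝ {x} : Set X) < 3 / 2 * δ := by
    linarith
  obtain ⟨p, hp, hdist⟩ := (Metric.infDist_lt_iff hne).mp hlt
  obtain ⟨t, rfl⟩ := Submodule.mem_span_singleton.mp hp
  rw [dist_eq_norm] at hdist
  have ht : abs (1 - abs t) ≤ ‖x₀ - t • x‖ := by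
    have := abs_norm_sub_norm_le x₀ (t • x)
    rw [norm_smul, hx, hx₀] at this
    simpa using this
  refine ⟨(if 0 ≤ t then (1:ℝ) else -1), ?_, ?_⟩
  · rcases le_or_gt 0 t with h | h
    · left; rw [if_pos h]
    · right; rw [if_neg (not_le.mpr h)]
  have hst : ‖(if 0 ≤ t then (1:ℝ) else -1) • x - t • x‖ = abs (1 - abs t) := by
    rw [← sub_smul, norm_smul, hx, mul_one, Real.norm_eq_abs]
    split <;> rename_i h
    · rw [abs_of_nonneg h]
    · rw [abs_of_neg (not_le.mp h)]
      rw [← abs_neg]; ring_nf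
  calc ‖(if 0 ≤ t then (1:ℝ) else -1) • x - x₀‖
      ≤ ‖(if 0 ≤ t then (1:ℝ) else -1) • x - t • x‖ + ‖t • x - x₀‖ := norm_sub_le_norm_sub_add_norm_sub _ _ _
    _ ≤ abs (1 - abs t) + ‖x₀ - t • x‖ := by rw [hst, norm_sub_rev]
    _ ≤ ‖x₀ - t • x‖ + ‖x₀ - t • x‖ := by linarith
    _ ≤ 3 * δ := by linarith

set_option maxHeartbeats 1000000 in
theorem stmt_14 {X Y : Type*} [NormedAddCommGroup X] [NormedSpace ℝ X]
    [NormedAddCommGroup Y] [NormedSpace ℝ Y]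
    (T : X →L[ℝ] Y) (x₀ : X) (hx₀ : ‖x₀‖ = 1)
    (hMT : ∀ x : X, ‖x‖ = 1 → (‖T x‖ = ‖T‖ ↔ x = x₀ ∨ x = -x₀))
    (hsmooth : ∀ y z : Y, (∀ l : ℝ, ‖T x₀‖ ≤ ‖T x₀ + l • y‖) →
      (∀ l : ℝ, ‖T x₀‖ ≤ ‖T x₀ + l • z‖) →
      (∀ l : ℝ, ‖T x₀‖ ≤ ‖T x₀ + l • (y + z)‖))
    (hhyp : ∀ δ : ℝ, 0 < δ → ∃ m : ℝ, m < ‖T‖ ∧ ∀ x : X, ‖x‖ = 1 →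
      (∃ f : X →L[ℝ] ℝ, f ≠ 0 ∧ f x = 0 ∧
        δ < Metric.infDist x₀ {h : X | f h = 0}) → ‖T x‖ ≤ m) :
    ∀ A₁ A₂ : X →L[ℝ] Y, (∀ l : ℝ, ‖T‖ ≤ ‖T + l • A₁‖) →
      (∀ l : ℝ, ‖T‖ ≤ ‖T + l • A₂‖) →
      (∀ l : ℝ, ‖T‖ ≤ ‖T + l • (A₁ + A₂)‖) := by
  have hnorm : ‖T x₀‖ = ‖T‖ := (hMT x₀ hx₀).mpr (Or.inl rfl)
  -- key step: T ⊥ A implies T x₀ ⊥ A x₀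
  have key : ∀ A : X →L[ℝ] Y, (∀ l : ℝ, ‖T‖ ≤ ‖T + l • A‖) →
      ∀ l : ℝ, ‖T x₀‖ ≤ ‖T x₀ + l • A x₀‖ := by
    intro A hTA l
    by_contra hcon
    push_neg at hcon
    set B : X →L[ℝ] Y := l • A with hB
    have hTB : ∀ c : ℝ, ‖T‖ ≤ ‖T + c • B‖ := by
      intro c
      have := hTA (c * l)
      rwa [hB, smul_smul]
    have hBx₀ : B x₀ = l • A x₀ := rfl
    set ε : ℝ := ‖T‖ - ‖T x₀ + B x₀‖ with hε
    have hε0 : 0 < ε := by rw [hε, hBx₀]; linarith [hcon, hnorm.symm.le]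
    have hT0 : 0 < ‖T‖ := lt_of_le_of_lt (norm_nonneg (T x₀ + B x₀)) (by linarith)
    have hTxB : ‖T x₀ + B x₀‖ = ‖T‖ - ε := by rw [hε]; ring
    clear_value B ε
    set C : ℝ := ‖T‖ + ‖B‖ with hC
    have hC0 : 0 ≤ C := by positivity
    clear_value C
    set δ : ℝ := ε / (6 * (C + 1)) with hδdef
    have hδ : 0 < δ := by positivity
    have h3δC : 3 * δ * C ≤ ε / 2 := by
      have h6 : δ * (6 * (C + 1)) = ε := by rw [hδdef]; field_simp
      nlinarith [mul_nonneg hδ.le hC0]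
    obtain ⟨m, hm, hmb⟩ := hhyp δ hδ
    clear_value δ
    set t : ℝ := min 1 ((‖T‖ - m) / (2 * (‖B‖ + 1))) with htdef
    have ht0 : 0 < t := lt_min one_pos (div_pos (by linarith) (by positivity))
    have ht1 : t ≤ 1 := min_le_left _ _
    have htB : t * ‖B‖ ≤ (‖T‖ - m) / 2 := by
      have h1 : t ≤ (‖T‖ - m) / (2 * (‖B‖ + 1)) := min_le_right _ _
      have h2 : 0 ≤ ‖B‖ := norm_nonneg _
      have := mul_le_mul_of_nonneg_right h1 h2
      calc t * ‖B‖ ≤ (‖T‖ - m) / (2 * (‖B‖ + 1)) * ‖B‖ := this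
        _ ≤ (‖T‖ - m) / 2 := by
            rw [div_mul_eq_mul_div, div_le_div_iff₀ (by positivity) (by norm_num)]
            nlinarith
    clear_value t
    have hεT : ε ≤ ‖T‖ := by
      rw [hε]; linarith [norm_nonneg (T x₀ + B x₀)]
    have htε : t * ε ≤ ‖T‖ := by
      calc t * ε ≤ 1 * ε := mul_le_mul_of_nonneg_right ht1 hε0.le
        _ = ε := one_mul ε
        _ ≤ ‖T‖ := hεT
    have hM0 : (0:ℝ) ≤ max ((m + ‖T‖) / 2) (‖T‖ - t * ε / 2) := by
      have h0 : (0:ℝ) ≤ ‖T‖ - t * ε / 2 := by linarith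
      exact le_trans h0 (le_max_right _ _)
    have hMT' : max ((m + ‖T‖) / 2) (‖T‖ - t * ε / 2) < ‖T‖ := by
      apply max_lt
      · linarith
      · have h1 : 0 < t * ε := mul_pos ht0 hε0
        linarith
    have hbound : ∀ x : X, ‖x‖ = 1 →
        ‖(T + t • B) x‖ ≤ max ((m + ‖T‖) / 2) (‖T‖ - t * ε / 2) := by
      intro x hx
      rcases le_or_gt (Metric.infDist x₀ (Submodule.span ℝ {x} : Set X)) δ with hnear | hfar
      · -- near case
        obtain ⟨s, hs, hsx⟩ := aux_near x₀ x δ hδ hx hx₀ hnear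
        have hsabs : |s| = 1 := by rcases hs with rfl | rfl <;> simp
        have heq : ‖(T + t • B) x‖ = ‖(T + t • B) (s • x)‖ := by
          rw [map_smul, norm_smul, Real.norm_eq_abs, hsabs, one_mul]
        rw [heq]
        set y : X := s • x with hy
        have hyx₀ : ‖y - x₀‖ ≤ 3 * δ := hsx
        clear_value y
        have hyn : ‖y‖ = 1 := by rw [hy, norm_smul, Real.norm_eq_abs, hsabs, hx, mul_one]
        have hTy : ‖T y‖ ≤ ‖T‖ := by
          calc ‖T y‖ ≤ ‖T‖ * ‖y‖ := T.le_opNorm y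
            _ = ‖T‖ := by rw [hyn, mul_one]
        have hTyx₀ : ‖T (y - x₀)‖ ≤ ‖T‖ * (3 * δ) :=
          le_trans (T.le_opNorm _) (mul_le_mul_of_nonneg_left hyx₀ (norm_nonneg T))
        have hByx₀ : ‖B (y - x₀)‖ ≤ ‖B‖ * (3 * δ) :=
          le_trans (B.le_opNorm _) (mul_le_mul_of_nonneg_left hyx₀ (norm_nonneg B))
        have hdecomp : (T + t • B) y =
            ((1 - t) • T y + t • (T y - T x₀) + t • (T x₀ + B x₀)) + t • (B y - B x₀) := by
          simp only [ContinuousLinearMap.add_apply, ContinuousLinearMap.smul_apply]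
          rw [smul_sub, smul_sub, smul_add, sub_smul, one_smul]
          abel
        have hnormcalc : ‖(T + t • B) y‖ ≤
            (1 - t) * ‖T y‖ + t * ‖T (y - x₀)‖ + t * ‖T x₀ + B x₀‖ + t * ‖B (y - x₀)‖ := by
          rw [hdecomp]
          refine le_trans (norm_add_le _ _) ?_
          have h1 := norm_add₃_le (E := Y) (a := (1 - t) • T y) (b := t • (T y - T x₀))
            (c := t • (T x₀ + B x₀))
          have e1 : ‖(1 - t) • T y‖ = (1 - t) * ‖T y‖ := by
            rw [norm_smul, Real.norm_eq_abs, abs_of_nonneg (by linarith)]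
          have e2 : ‖t • (T y - T x₀)‖ = t * ‖T (y - x₀)‖ := by
            rw [norm_smul, Real.norm_eq_abs, abs_of_pos ht0, map_sub]
          have e3 : ‖t • (T x₀ + B x₀)‖ = t * ‖T x₀ + B x₀‖ := by
            rw [norm_smul, Real.norm_eq_abs, abs_of_pos ht0]
          have e4 : ‖t • (B y - B x₀)‖ = t * ‖B (y - x₀)‖ := by
            rw [norm_smul, Real.norm_eq_abs, abs_of_pos ht0, map_sub]
          rw [e1, e2, e3] at h1
          rw [e4]
          linarith
        have : ‖(T + t • B) y‖ ≤ ‖T‖ - t * (ε / 2) := by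
          rw [hTxB] at hnormcalc
          have hCsum : t * (‖T‖ * (3 * δ)) + t * (‖B‖ * (3 * δ)) = t * (3 * δ * C) := by
            rw [hC]; ring
          nlinarith [mul_le_mul_of_nonneg_left h3δC ht0.le,
            mul_le_mul_of_nonneg_left hTyx₀ ht0.le,
            mul_le_mul_of_nonneg_left hByx₀ ht0.le]
        refine le_trans this (le_trans (by linarith) (le_max_right _ _))
      · -- far case
        obtain ⟨f, hf0, hfx, hfd⟩ := aux_hb x₀ x δ hδ hfar
        have hTx : ‖T x‖ ≤ m := hmb x hx ⟨f, hf0, hfx, hfd⟩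
        have hBx : ‖B x‖ ≤ ‖B‖ := by
          calc ‖B x‖ ≤ ‖B‖ * ‖x‖ := B.le_opNorm x
            _ = ‖B‖ := by rw [hx, mul_one]
        have : ‖(T + t • B) x‖ ≤ m + t * ‖B‖ := by
          simp only [ContinuousLinearMap.add_apply, ContinuousLinearMap.smul_apply]
          refine le_trans (norm_add_le _ _) ?_
          rw [norm_smul, Real.norm_eq_abs, abs_of_pos ht0]
          have := mul_le_mul_of_nonneg_left hBx ht0.le
          linarith
        refine le_trans this (le_trans ?_ (le_max_left _ _))
        linarith
    have hop : ‖T + t • B‖ ≤ max ((m + ‖T‖) / 2) (‖T‖ - t * ε / 2) :=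
      ContinuousLinearMap.opNorm_le_of_unit_norm hM0 hbound
    have := hTB t
    linarith
  intro A₁ A₂ h₁ h₂ l
  have hx₀A := hsmooth (A₁ x₀) (A₂ x₀) (key A₁ h₁) (key A₂ h₂) l
  have happ : (T + l • (A₁ + A₂)) x₀ = T x₀ + l • (A₁ x₀ + A₂ x₀) := by
    simp only [ContinuousLinearMap.add_apply, ContinuousLinearMap.smul_apply]
  calc ‖T‖ = ‖T x₀‖ := hnorm.symm
    _ ≤ ‖T x₀ + l • (A₁ x₀ + A₂ x₀)‖ := hx₀A
    _ = ‖(T + l • (A₁ + A₂)) x₀‖ := by rw [happ]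
    _ ≤ ‖T + l • (A₁ + A₂)‖ * ‖x₀‖ := (T + l • (A₁ + A₂)).le_opNorm x₀
    _ = ‖T + l • (A₁ + A₂)‖ := by rw [hx₀, mul_one]
end

section
/- Let X, Y be normed linear spaces and T a bounded linear operator such that Birkhoff-James orthogonality from T is right-additive (T ⊥_B A₁ and T ⊥_B A₂ imply T ⊥_B (A₁+A₂)) and M_T is nonempty with M_T = {x₀, −x₀} for a unit vector x₀. Then for every hyperplane H through the origin (kernel of a nonzero bounded linear functional) with d(x₀, H) > 0, one has sup{‖Tx‖ : x a unit vector in H} < ‖T‖. -/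
theorem stmt_15 {X Y : Type*} [NormedAddCommGroup X] [NormedSpace ℝ X]
    [NormedAddCommGroup Y] [NormedSpace ℝ Y]
    (T : X →L[ℝ] Y) (x₀ : X) (hx₀ : ‖x₀‖ = 1)
    (hMT : ∀ x : X, ‖x‖ = 1 → (‖T x‖ = ‖T‖ ↔ x = x₀ ∨ x = -x₀))
    (hadd : ∀ A₁ A₂ : X →L[ℝ] Y, (∀ l : ℝ, ‖T‖ ≤ ‖T + l • A₁‖) →
      (∀ l : ℝ, ‖T‖ ≤ ‖T + l • A₂‖) →
      (∀ l : ℝ, ‖T‖ ≤ ‖T + l • (A₁ + A₂)‖)) :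
    ∀ f : X →L[ℝ] ℝ, f ≠ 0 → 0 < Metric.infDist x₀ {h : X | f h = 0} →
      ∃ m : ℝ, m < ‖T‖ ∧ ∀ x : X, ‖x‖ = 1 → f x = 0 → ‖T x‖ ≤ m := by
  intro f hf hd
  by_contra hcon
  push_neg at hcon
  -- hcon : ∀ m, m < ‖T‖ → ∃ x, ‖x‖ = 1 ∧ f x = 0 ∧ m < ‖T x‖
  have hfx₀ : f x₀ ≠ 0 := by
    intro h
    have hmem : x₀ ∈ {h : X | f h = 0} := h
    have := Metric.infDist_zero_of_mem hmem
    rw [this] at hd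
    exact lt_irrefl _ hd
  have hTx₀ : ‖T x₀‖ = ‖T‖ := (hMT x₀ hx₀).mpr (Or.inl rfl)
  -- operators vanishing at x₀ are B-orthogonal to T
  have key2 : ∀ A : X →L[ℝ] Y, A x₀ = 0 → ∀ l : ℝ, ‖T‖ ≤ ‖T + l • A‖ := by
    intro A hA l
    have h1 : (T + l • A) x₀ = T x₀ := by
      simp [ContinuousLinearMap.add_apply, ContinuousLinearMap.smul_apply, hA]
    calc ‖T‖ = ‖(T + l • A) x₀‖ := by rw [h1, hTx₀]
      _ ≤ ‖T + l • A‖ := (T + l • A).unit_le_opNorm x₀ hx₀.le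
  set g : X →L[ℝ] ℝ := (f x₀)⁻¹ • f with hg
  -- rank-one operators g ⊗ y are B-orthogonal to T
  have key1 : ∀ y : Y, ∀ l : ℝ, ‖T‖ ≤ ‖T + l • (g.smulRight y)‖ := by
    intro y l
    refine le_of_forall_sub_le ?_
    intro ε hε
    obtain ⟨x, hx1, hx2, hx3⟩ := hcon (‖T‖ - ε) (by linarith)
    have hgx : g x = 0 := by simp [hg, hx2]
    have hEx : (T + l • (g.smulRight y)) x = T x := by
      simp [ContinuousLinearMap.add_apply, ContinuousLinearMap.smul_apply,
        ContinuousLinearMap.smulRight_apply, hgx]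
    calc ‖T‖ - ε ≤ ‖T x‖ := le_of_lt hx3
      _ = ‖(T + l • (g.smulRight y)) x‖ := by rw [hEx]
      _ ≤ ‖T + l • (g.smulRight y)‖ := (T + l • (g.smulRight y)).unit_le_opNorm x hx1.le
  set A₁ : X →L[ℝ] Y := g.smulRight (T x₀) with hA₁
  have hA₂0 : (T - A₁) x₀ = 0 := by
    simp [hA₁, hg, ContinuousLinearMap.sub_apply, ContinuousLinearMap.smulRight_apply,
      smul_smul, inv_mul_cancel₀ hfx₀]
  have hsum : A₁ + (T - A₁) = T := by abel
  have h3 := hadd A₁ (T - A₁) (key1 (T x₀)) (key2 _ hA₂0) (-1)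
  rw [hsum] at h3
  have hzero : T + (-1 : ℝ) • T = 0 := by
    simp [neg_smul, one_smul]
  rw [hzero, norm_zero] at h3
  have hT0 : ‖T‖ = 0 := le_antisymm h3 (norm_nonneg _)
  obtain ⟨x, hx1, hx2, hx3⟩ := hcon (-1) (by rw [hT0]; norm_num)
  have hTx : ‖T x‖ = ‖T‖ := by
    refine le_antisymm ?_ ?_
    · exact T.unit_le_opNorm x hx1.le
    · rw [hT0]; exact norm_nonneg _
  rcases (hMT x hx1).mp hTx with h | h
  · exact hfx₀ (h ▸ hx2)
  · apply hfx₀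
    have : f (-x₀) = 0 := h ▸ hx2
    simpa using this
end

section
/- In a real normed linear space X, if x, y are linearly independent vectors then there exists a real number β such that x + βy is Birkhoff-James orthogonal to y, and moreover ‖x + λy‖ ≥ ‖x + βy‖ > 0 for all real λ. -/
/-!
The function `l ↦ ‖x + l • y‖` is continuous and coercive when `y ≠ 0` (constant when `y = 0`),
so it attains its minimum at some `β`. Minimality at `β`, read along the line through
`x + β • y` in direction `y`, is exactly Birkhoff–James orthogonality of `x + β • y` to `y`;
and `x + β • y ≠ 0` because `x` and `y` are linearly independent.
-/

open Filter

section

variable {E : Type*} [NormedAddCommGroup E] [NormedSpace ℝ E]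

def BirkhoffJamesOrthogonal (u v : E) : Prop :=
  ∀ l : ℝ, ‖u‖ ≤ ‖u + l • v‖

theorem tendsto_norm_add_smul_cocompact (x : E) {y : E} (hy : y ≠ 0) :
    Tendsto (fun l : ℝ => ‖x + l • y‖) (cocompact ℝ) atTop := by
  have habs : Tendsto (fun l : ℝ => |l|) (cocompact ℝ) atTop :=
    (tendsto_norm_cocompact_atTop (E := ℝ)).congr Real.norm_eq_abs
  have hlower : Tendsto (fun l : ℝ => |l| * ‖y‖ - ‖x‖) (cocompact ℝ) atTop :=
    (habs.atTop_mul_const (norm_pos_iff.mpr hy)).atTop_add tendsto_const_nhds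
  refine tendsto_atTop_mono (fun l => ?_) hlower
  have := norm_sub_norm_le (l • y) (-x)
  rw [norm_smul, Real.norm_eq_abs, norm_neg, sub_neg_eq_add, add_comm] at this
  linarith

theorem exists_forall_norm_add_smul_le (x y : E) :
    ∃ β : ℝ, ∀ l : ℝ, ‖x + β • y‖ ≤ ‖x + l • y‖ := by
  rcases eq_or_ne y 0 with rfl | hy
  · exact ⟨0, fun l => by simp⟩
  · exact (by fun_prop : Continuous fun l : ℝ => ‖x + l • y‖).exists_forall_le
      (tendsto_norm_add_smul_cocompact x hy)

theorem birkhoffJamesOrthogonal_of_forall_norm_add_smul_le {x y : E} {β : ℝ}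
    (hβ : ∀ l : ℝ, ‖x + β • y‖ ≤ ‖x + l • y‖) :
    BirkhoffJamesOrthogonal (x + β • y) y := fun l => by
  simpa only [add_smul, add_assoc] using hβ (β + l)

theorem add_smul_ne_zero_of_linearIndependent {x y : E} (h : LinearIndependent ℝ ![x, y])
    (β : ℝ) : x + β • y ≠ 0 := fun h0 =>
  one_ne_zero (LinearIndependent.pair_iff.mp h 1 β (by rwa [one_smul])).1

end

theorem stmt_16 {X : Type*} [NormedAddCommGroup X] [NormedSpace ℝ X]
    (x y : X) (h : LinearIndependent ℝ ![x, y]) :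
    ∃ β : ℝ, (∀ l : ℝ, ‖x + β • y‖ ≤ ‖x + β • y + l • y‖) ∧
      0 < ‖x + β • y‖ ∧ (∀ l : ℝ, ‖x + β • y‖ ≤ ‖x + l • y‖) := by
  obtain ⟨β, hβ⟩ := exists_forall_norm_add_smul_le x y
  exact ⟨β, birkhoffJamesOrthogonal_of_forall_norm_add_smul_le hβ,
    norm_pos_iff.mpr (add_smul_ne_zero_of_linearIndependent h β), hβ⟩
end
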